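/- arXiv:2306.13578 — 6 statements merged into one kernel-verified Lean document; each statement's English description precedes it below -/
import Mathlib

section
/- Let C ⊂ ℝ^n be an n-dimensional polyhedral cone, i.e. C = {Σ_{r∈A} c_r r : c_r ≥ 0} for some finite set A ⊂ ℝ^n, with C not contained in any proper linear subspace. Let v ∈ ℝ^n satisfy y·v < 0 for all y ∈ C ∖ {0}. Then the set B = {y ∈ C : y·v ≥ −1} is bounded, and ∫_C exp(y·v) dy = n! · λ(B), where λ is Lebesgue measure on ℝ^n and the integral is with respect to Lebesgue measure. -/
open MeasureTheory Set Pointwise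

private def dotL {n : ℕ} (v : Fin n → ℝ) : (Fin n → ℝ) →ₗ[ℝ] ℝ where
  toFun y := ∑ j, y j * v j
  map_add' x y := by simp [add_mul, Finset.sum_add_distrib]
  map_smul' c x := by
    simp only [Pi.smul_apply, smul_eq_mul, RingHom.id_apply, Finset.mul_sum]
    exact Finset.sum_congr rfl fun j _ => by ring

private lemma dotL_cont {n : ℕ} (v : Fin n → ℝ) : Continuous (dotL v) := by
  simp only [dotL, LinearMap.coe_mk, AddHom.coe_mk]
  exact continuous_finset_sum _ fun j _ => (continuous_apply j).mul continuous_const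

private lemma hyperplane_null {n : ℕ} {v : Fin n → ℝ} (hv : v ≠ 0) (c : ℝ) :
    volume {y : Fin n → ℝ | dotL v y = c} = 0 := by
  obtain ⟨j, hj⟩ : ∃ j, v j ≠ 0 := by
    by_contra h
    push_neg at h
    exact hv (funext h)
  have hsingle : dotL v (Pi.single j 1) = v j := by
    simp only [dotL, LinearMap.coe_mk, AddHom.coe_mk]
    rw [Finset.sum_eq_single j]
    · simp
    · intro i _ hi; simp [Pi.single_eq_of_ne hi]
    · simp
  set y₀ : Fin n → ℝ := (c / v j) • (Pi.single j 1 : Fin n → ℝ) with hy₀def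
  have hy₀ : dotL v y₀ = c := by
    rw [hy₀def, LinearMap.map_smul, hsingle, smul_eq_mul, div_mul_cancel₀ _ hj]
  have hset : {y : Fin n → ℝ | dotL v y = c} = y₀ +ᵥ (LinearMap.ker (dotL v) : Set (Fin n → ℝ)) := by
    ext y
    simp only [Set.mem_setOf_eq, Set.mem_vadd_set, SetLike.mem_coe, LinearMap.mem_ker]
    constructor
    · intro h
      exact ⟨y - y₀, by rw [map_sub, h, hy₀, sub_self], by simp⟩
    · rintro ⟨z, hz, rfl⟩
      simp [map_add, hz, hy₀]
  rw [hset, @measure_vadd (Fin n → ℝ) (Fin n → ℝ) _ _ _ volume _ y₀ _]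
  apply Measure.addHaar_submodule
  intro h
  have : Pi.single j 1 ∈ LinearMap.ker (dotL v) := h ▸ Submodule.mem_top
  rw [LinearMap.mem_ker, hsingle] at this
  exact hj this

private lemma neg_log_pow_facts (n : ℕ) :
    IntegrableOn (fun t => (-Real.log t) ^ n) (Set.Ioo (0:ℝ) 1) volume ∧
    ∫ t in Set.Ioo (0:ℝ) 1, (-Real.log t) ^ n = n.factorial := by
  have hderiv : ∀ x ∈ Set.Ioi (0:ℝ),
      HasDerivWithinAt (fun u => Real.exp (-u)) (-Real.exp (-x)) (Set.Ioi 0) x := by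
    intro x _
    have h := ((Real.hasDerivAt_exp (-x)).comp x ((hasDerivAt_id x).neg))
    have h2 : HasDerivAt (fun u => Real.exp (-u)) (Real.exp (-x) * -1) x := h
    simpa using h2.hasDerivWithinAt
  have hinj : Set.InjOn (fun u => Real.exp (-u)) (Set.Ioi 0) := by
    intro a _ b _ h
    have := Real.exp_injective h
    linarith
  have himg : (fun u => Real.exp (-u)) '' Set.Ioi 0 = Set.Ioo 0 1 := by
    ext x
    constructor
    · rintro ⟨u, hu, rfl⟩
      refine ⟨Real.exp_pos _, ?_⟩
      rw [Real.exp_lt_one_iff]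
      simpa using hu
    · intro hx
      refine ⟨-Real.log x, ?_, by simp [Real.exp_log hx.1]⟩
      simpa using Real.log_neg hx.1 hx.2
  have heq : ∀ x ∈ Set.Ioi (0:ℝ),
      |(-Real.exp (-x))| • (-Real.log (Real.exp (-x))) ^ n = Real.exp (-x) * x ^ ((n:ℝ) + 1 - 1) := by
    intro x _
    rw [Real.log_exp, neg_neg, abs_neg, abs_of_pos (Real.exp_pos _), smul_eq_mul]
    norm_num [Real.rpow_natCast]
  constructor
  · rw [← himg, integrableOn_image_iff_integrableOn_abs_deriv_smul measurableSet_Ioi hderiv hinj]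
    exact (Real.GammaIntegral_convergent (by positivity : (0:ℝ) < (n:ℝ) + 1)).congr_fun
      (fun x hx => ((heq x hx).symm)) measurableSet_Ioi
  · rw [← himg, integral_image_eq_integral_abs_deriv_smul measurableSet_Ioi hderiv hinj]
    rw [setIntegral_congr_fun measurableSet_Ioi heq]
    rw [← Real.Gamma_eq_integral (by positivity : (0:ℝ) < (n:ℝ) + 1)]
    exact_mod_cast Real.Gamma_nat_eq_factorial n

/-- Let `C ⊂ ℝⁿ` be an `n`-dimensional polyhedral cone, the positive hull
of a finite set `A` spanning `ℝⁿ`, and let `v` satisfy `y·v < 0` for all `y ∈ C \ {0}`.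
Then `B = {y ∈ C : y·v ≥ -1}` is bounded and `∫_C exp(y·v) dy = n! · λ(B)`. -/
theorem stmt_1 (n : ℕ) (A : Finset (Fin n → ℝ))
    (C : Set (Fin n → ℝ))
    (hC : C = {x | ∃ cf : (Fin n → ℝ) → ℝ, (∀ r, 0 ≤ cf r) ∧ x = ∑ r ∈ A, cf r • r})
    (hdim : Submodule.span ℝ (A : Set (Fin n → ℝ)) = ⊤)
    (v : Fin n → ℝ) (hv : ∀ y ∈ C, y ≠ 0 → ∑ j, y j * v j < 0)
    (B : Set (Fin n → ℝ)) (hB : B = {y ∈ C | -1 ≤ ∑ j, y j * v j}) :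
    Bornology.IsBounded B ∧
      ∫ y in C, Real.exp (∑ j, y j * v j) =
        (n.factorial : ℝ) * (volume B).toReal := by
  classical
  have hv' : ∀ y ∈ C, y ≠ 0 → dotL v y < 0 := hv
  have hB' : B = {y ∈ C | -1 ≤ dotL v y} := hB
  -- basic cone facts
  have hC0 : (0 : Fin n → ℝ) ∈ C := by
    rw [hC]; exact ⟨fun _ => 0, fun _ => le_refl 0, by simp⟩
  have hCs : ∀ (c : ℝ), 0 ≤ c → ∀ x ∈ C, c • x ∈ C := by
    rw [hC]; rintro c hc x ⟨cf, hcf, rfl⟩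
    exact ⟨fun r => c * cf r, fun r => mul_nonneg hc (hcf r), by
      rw [Finset.smul_sum]
      exact Finset.sum_congr rfl fun r _ => by
        show c • cf r • r = (c * cf r) • r
        rw [smul_smul]⟩
  have hAC : ∀ r ∈ A, r ∈ C := by
    intro r hr; rw [hC]
    refine ⟨fun x => if x = r then 1 else 0, fun x => by dsimp only; split <;> norm_num, ?_⟩
    have h2 : ∀ x ∈ A, (if x = r then (1:ℝ) else 0) • x = if x = r then x else 0 := by
      intro x _; split_ifs <;> simp
    rw [Finset.sum_congr rfl h2, Finset.sum_ite_eq' A r (fun x => x), if_pos hr]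
  have hfC : ∀ y ∈ C, dotL v y ≤ 0 := by
    intro y hy
    by_cases h : y = 0
    · subst h; simp
    · exact (hv' y hy h).le
  have hf_smul : ∀ (c : ℝ) (y : Fin n → ℝ), dotL v (c • y) = c * dotL v y := by
    intro c y
    rw [LinearMap.map_smul, smul_eq_mul]
  -- boundedness of B
  have hBbd : Bornology.IsBounded B := by
    rw [isBounded_iff_forall_norm_le]
    refine ⟨∑ r ∈ A, if r = (0 : Fin n → ℝ) then 0 else ‖r‖ / (-dotL v r), ?_⟩
    intro y hy
    rw [hB'] at hy
    obtain ⟨hyC, hyf⟩ := hy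
    rw [hC] at hyC
    obtain ⟨cf, hcf, rfl⟩ := hyC
    have hfy : dotL v (∑ r ∈ A, cf r • r) = ∑ r ∈ A, cf r * dotL v r := by
      rw [map_sum]
      exact Finset.sum_congr rfl fun r _ => by rw [LinearMap.map_smul, smul_eq_mul]
    have hsum1 : ∑ r ∈ A, cf r * (-dotL v r) ≤ 1 := by
      have h2 : ∑ r ∈ A, cf r * (-dotL v r) = -∑ r ∈ A, cf r * dotL v r := by
        rw [← Finset.sum_neg_distrib]
        exact Finset.sum_congr rfl fun r _ => by ring
      rw [h2, ← hfy] at *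
      linarith
    have hterm : ∀ r ∈ A, cf r * (-dotL v r) ≤ 1 := by
      intro r hr
      refine le_trans (Finset.single_le_sum (f := fun r => cf r * (-dotL v r)) ?_ hr) hsum1
      intro i hi
      exact mul_nonneg (hcf i) (neg_nonneg.2 (hfC i (hAC i hi)))
    calc ‖∑ r ∈ A, cf r • r‖ ≤ ∑ r ∈ A, ‖cf r • r‖ := norm_sum_le _ _
      _ ≤ ∑ r ∈ A, if r = (0 : Fin n → ℝ) then 0 else ‖r‖ / (-dotL v r) := by
          refine Finset.sum_le_sum fun r hr => ?_
          rw [norm_smul, Real.norm_eq_abs, abs_of_nonneg (hcf r)]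
          split_ifs with h0
          · subst h0; simp
          · have hfr : dotL v r < 0 := hv' r (hAC r hr) h0
            have h1 : cf r ≤ 1 / (-dotL v r) := by
              rw [le_div_iff₀ (by linarith)]
              exact hterm r hr
            calc cf r * ‖r‖ ≤ (1 / (-dotL v r)) * ‖r‖ :=
                  mul_le_mul_of_nonneg_right h1 (norm_nonneg r)
              _ = ‖r‖ / (-dotL v r) := by ring
  -- scaling identity
  have hscale : ∀ s : ℝ, 0 < s → C ∩ {y | -s ≤ dotL v y} = s • B := by
    intro s hs
    ext y
    constructor
    · rintro ⟨hyC, hys⟩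
      refine Set.mem_smul_set.mpr ⟨s⁻¹ • y, ?_, smul_inv_smul₀ hs.ne' y⟩
      rw [hB']
      refine ⟨hCs s⁻¹ (by positivity) y hyC, ?_⟩
      show -1 ≤ dotL v (s⁻¹ • y)
      rw [hf_smul]
      have h2 : s⁻¹ * (-s) ≤ s⁻¹ * dotL v y :=
        mul_le_mul_of_nonneg_left hys (by positivity)
      have h3 : s⁻¹ * (-s) = -1 := by field_simp
      linarith
    · intro h
      obtain ⟨b, hb, rfl⟩ := Set.mem_smul_set.mp h
      rw [hB'] at hb
      obtain ⟨hbC, hbf⟩ := hb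
      refine ⟨hCs s hs.le b hbC, ?_⟩
      show -s ≤ dotL v (s • b)
      rw [hf_smul]
      nlinarith
  -- n = 0 case
  rcases Nat.eq_zero_or_pos n with hn | hn
  · subst hn
    have hsub : ∀ y : Fin 0 → ℝ, y = 0 := fun y => funext fun i => i.elim0
    have hCuniv : C = Set.univ := by
      ext x
      simp only [Set.mem_univ, iff_true]
      rw [hC]
      exact ⟨fun _ => 0, fun _ => le_rfl, by rw [hsub x]; simp⟩
    have hBuniv : B = Set.univ := by
      rw [hB', hCuniv]
      ext y
      simp only [Set.mem_univ, Set.sep_univ, Set.mem_setOf_eq, iff_true]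
      rw [hsub y, map_zero]
      norm_num
    have huviv : (Set.univ : Set (Fin 0 → ℝ)) = {0} := by
      ext y; simp [hsub y]
    have hvol : volume (Set.univ : Set (Fin 0 → ℝ)) = 1 := by
      simp [volume_pi, Measure.pi_univ]
    constructor
    · rw [hBuniv, huviv]
      exact Bornology.isBounded_singleton
    · rw [hCuniv, hBuniv, Measure.restrict_univ]
      have hone : ∀ y : Fin 0 → ℝ, Real.exp (∑ j, y j * v j) = 1 := by
        intro y; simp
      rw [integral_congr_ae (ae_of_all _ hone)]
      simp [Measure.real, hvol]
  -- main case n ≥ 1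
  · have hvne : v ≠ 0 := by
      obtain ⟨r0, hr0A, hr0⟩ : ∃ r ∈ A, r ≠ 0 := by
        by_contra h
        push_neg at h
        have hspan : Submodule.span ℝ (A : Set (Fin n → ℝ)) ≤ ⊥ := by
          rw [Submodule.span_le]
          intro x hx
          simp only [SetLike.mem_coe, Submodule.mem_bot]
          exact h x hx
        rw [hdim] at hspan
        have h1 : (Pi.single (⟨0, hn⟩ : Fin n) 1 : Fin n → ℝ) = 0 := by
          have := hspan (Submodule.mem_top (x := (Pi.single (⟨0, hn⟩ : Fin n) 1 : Fin n → ℝ)))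
          rwa [Submodule.mem_bot] at this
        have h2 := congrFun h1 ⟨0, hn⟩
        simp at h2
      intro h0
      have h1 := hv' r0 (hAC r0 hr0A) hr0
      have h2 : dotL v r0 = 0 := by
        rw [h0]; simp [dotL]
      linarith
    -- measurability of C
    have hCmeas : MeasurableSet C := by
      let Φ : (↥A → ℝ) → (Fin n → ℝ) := fun c => ∑ r : ↥A, c r • (r : Fin n → ℝ)
      have hΦ : Continuous Φ :=
        continuous_finset_sum _ fun r _ => (continuous_apply r).smul continuous_const
      have key : C = ⋃ k : ℕ, Φ '' (Set.Icc 0 (fun _ => (k : ℝ))) := by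
        ext x
        simp only [Set.mem_iUnion, hC, Set.mem_setOf_eq, Set.mem_image]
        constructor
        · rintro ⟨cf, hcf, rfl⟩
          refine ⟨⌈∑ r ∈ A, cf r⌉₊, fun r => cf r, ⟨?_, ?_⟩, ?_⟩
          · intro r; exact hcf r
          · intro r
            calc cf ↑r ≤ ∑ r ∈ A, cf r :=
                  Finset.single_le_sum (fun i _ => hcf i) r.2
              _ ≤ ⌈∑ r ∈ A, cf r⌉₊ := Nat.le_ceil _
          · exact (Finset.sum_coe_sort A (fun r => cf r • r))
        · rintro ⟨k, c, ⟨hc0, _⟩, rfl⟩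
          refine ⟨fun x => if h : x ∈ A then c ⟨x, h⟩ else 0, ?_, ?_⟩
          · intro r
            dsimp only
            split
            · exact hc0 _
            · exact le_rfl
          · show Φ c = ∑ r ∈ A, (if h : r ∈ A then c ⟨r, h⟩ else 0) • r
            rw [← Finset.sum_coe_sort A (fun r => (if h : r ∈ A then c ⟨r, h⟩ else 0) • r)]
            exact Finset.sum_congr rfl fun r _ => by rw [dif_pos r.2]
      rw [key]
      exact MeasurableSet.iUnion fun k => ((isCompact_Icc.image hΦ)).measurableSet
    have hBfin : volume B ≠ ⊤ := hBbd.measure_lt_top.ne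
    have hfinrank : Module.finrank ℝ (Fin n → ℝ) = n := by
      rw [Module.finrank_fintype_fun_eq_card, Fintype.card_fin]
    have hcont : Continuous fun y : Fin n → ℝ => Real.exp (dotL v y) :=
      Real.continuous_exp.comp (dotL_cont v)
    have key : ∫⁻ y in C, ENNReal.ofReal (Real.exp (dotL v y)) =
        ENNReal.ofReal (n.factorial : ℝ) * volume B := by
      rw [lintegral_eq_lintegral_meas_le (volume.restrict C)
        (ae_of_all _ fun y => (Real.exp_pos _).le) hcont.measurable.aemeasurable]
      have hpoint : ∀ t ∈ Ioi (0:ℝ), (volume.restrict C) {y | t ≤ Real.exp (dotL v y)} =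
          (Ioo (0:ℝ) 1).indicator (fun t => ENNReal.ofReal ((-Real.log t) ^ n) * volume B) t := by
        intro t ht
        have hts : {y : Fin n → ℝ | t ≤ Real.exp (dotL v y)} = {y | Real.log t ≤ dotL v y} :=
          Set.ext fun y => (Real.log_le_iff_le_exp ht).symm
        rw [hts, Measure.restrict_apply' hCmeas]
        rcases lt_trichotomy t 1 with h1 | h1 | h1
        · have hlt : 0 < -Real.log t := by
            have := Real.log_neg ht h1; linarith
          have hset2 : {y : Fin n → ℝ | Real.log t ≤ dotL v y} ∩ C = (-Real.log t) • B := by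
            rw [← hscale _ hlt, Set.inter_comm]
            congr 1
            ext y
            simp only [Set.mem_setOf_eq]
            constructor <;> intro h <;> linarith
          rw [hset2, Measure.addHaar_smul, hfinrank, Set.indicator_of_mem (Set.mem_Ioo.mpr ⟨ht, h1⟩),
            abs_of_nonneg (by positivity)]
        · subst h1
          rw [Set.indicator_of_notMem (by simp)]
          refine measure_mono_null ?_ (hyperplane_null hvne 0)
          rintro y ⟨h2, hyC⟩
          simp only [Real.log_one] at h2
          exact le_antisymm (hfC y hyC) h2
        · rw [Set.indicator_of_notMem (by simp [not_lt.mpr h1.le])]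
          have hempty : {y : Fin n → ℝ | Real.log t ≤ dotL v y} ∩ C = ∅ := by
            ext y
            simp only [Set.mem_inter_iff, Set.mem_setOf_eq, Set.mem_empty_iff_false, iff_false,
              not_and]
            intro h2 hyC
            have h3 := hfC y hyC
            have h4 := Real.log_pos h1
            linarith
          rw [hempty, measure_empty]
      rw [setLIntegral_congr_fun measurableSet_Ioi hpoint]
      rw [lintegral_indicator measurableSet_Ioo, Measure.restrict_restrict measurableSet_Ioo,
        Set.inter_eq_self_of_subset_left Set.Ioo_subset_Ioi_self]
      rw [lintegral_mul_const' (volume B) _ hBfin]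
      congr 1
      obtain ⟨hInt, hVal⟩ := neg_log_pow_facts n
      rw [← hVal]
      rw [← ofReal_integral_eq_lintegral_ofReal hInt]
      exact (ae_restrict_iff' measurableSet_Ioo).2 (ae_of_all _ fun t htt => by
        have hlt : 0 < -Real.log t := by
          have := Real.log_neg htt.1 htt.2; linarith
        positivity)
    refine ⟨hBbd, ?_⟩
    show ∫ y in C, Real.exp (dotL v y) = _
    rw [integral_eq_lintegral_of_nonneg_ae (ae_of_all _ fun y => (Real.exp_pos _).le)
      hcont.aestronglyMeasurable]
    rw [key, ENNReal.toReal_mul, ENNReal.toReal_ofReal (Nat.cast_nonneg _)]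
end

section
/- Let f₁,…,f_ℓ be Laurent polynomials in n variables with positive real coefficients, let s ∈ ℝ_{>0}^ℓ, suppose Δ(f₁) + ⋯ + Δ(f_ℓ) has dimension n, and let ν ∈ int(P(s)) with P(s) = s₁·Δ(f₁) + ⋯ + s_ℓ·Δ(f_ℓ). Then there is exactly one point a ∈ ℝ^n_+ = (0,∞)^n satisfying the critical point equations ν_j = a_j · Σ_{i=1}^ℓ s_i (∂f_i/∂x_j)(a) / f_i(a) for j = 1,…,n. -/
open Pointwise

private lemma exp_zpow' (x : ℝ) (m : ℤ) : Real.exp x ^ m = Real.exp (m * x) := by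
  rw [← Real.rpow_intCast, Real.rpow_def_of_pos (Real.exp_pos x), Real.log_exp, mul_comm]

private lemma sumexp_pos {ι : Type*} {T : Finset ι} (hT : T.Nonempty) {k : ι → ℝ}
    (hk : ∀ α ∈ T, 0 < k α) (b : ι → ℝ) (t : ℝ) :
    0 < ∑ α ∈ T, k α * Real.exp (b α * t) :=
  Finset.sum_pos (fun α hα => mul_pos (hk α hα) (Real.exp_pos _)) hT

private lemma hasDerivAt_sumexp {ι : Type*} (T : Finset ι) (k b : ι → ℝ) (t : ℝ) :
    HasDerivAt (fun t => ∑ α ∈ T, k α * Real.exp (b α * t))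
      (∑ α ∈ T, (k α * b α) * Real.exp (b α * t)) t := by
  apply HasDerivAt.fun_sum
  intro α _
  have h1 : HasDerivAt (fun t : ℝ => b α * t) (b α) t := by
    simpa using (hasDerivAt_id t).const_mul (b α)
  have h2 := (h1.exp).const_mul (k α)
  exact h2.congr_deriv (by ring)

private lemma gibbs_identity {ι : Type*} (T : Finset ι) (p b : ι → ℝ) :
    ∑ α ∈ T, ∑ β ∈ T, p α * p β * (b α - b β) ^ 2
      = 2 * ((∑ α ∈ T, p α * b α ^ 2) * (∑ α ∈ T, p α) - (∑ α ∈ T, p α * b α) ^ 2) := by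
  have h1 : ∀ α β, p α * p β * (b α - b β) ^ 2
      = (p α * b α ^ 2) * p β + p α * (p β * b β ^ 2) - (2 * (p α * b α)) * (p β * b β) :=
    fun α β => by ring
  simp only [h1, Finset.sum_add_distrib, Finset.sum_sub_distrib, ← Finset.mul_sum,
    ← Finset.sum_mul]
  ring

private lemma gibbs_nonneg {ι : Type*} (T : Finset ι) (p b : ι → ℝ)
    (hp : ∀ α ∈ T, 0 < p α) :
    0 ≤ (∑ α ∈ T, p α * b α ^ 2) * (∑ α ∈ T, p α) - (∑ α ∈ T, p α * b α) ^ 2 := by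
  have h := gibbs_identity T p b
  have h0 : (0:ℝ) ≤ ∑ α ∈ T, ∑ β ∈ T, p α * p β * (b α - b β) ^ 2 :=
    Finset.sum_nonneg fun α hα => Finset.sum_nonneg fun β hβ =>
      mul_nonneg (mul_nonneg (hp α hα).le (hp β hβ).le) (sq_nonneg _)
  linarith

private lemma gibbs_pos {ι : Type*} (T : Finset ι) (p b : ι → ℝ)
    (hp : ∀ α ∈ T, 0 < p α) {α₀ β₀ : ι} (hα₀ : α₀ ∈ T) (hβ₀ : β₀ ∈ T)
    (hne : b α₀ ≠ b β₀) :
    0 < (∑ α ∈ T, p α * b α ^ 2) * (∑ α ∈ T, p α) - (∑ α ∈ T, p α * b α) ^ 2 := by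
  have h := gibbs_identity T p b
  have h0 : (0:ℝ) < ∑ α ∈ T, ∑ β ∈ T, p α * p β * (b α - b β) ^ 2 := by
    refine Finset.sum_pos' (fun α hα => Finset.sum_nonneg fun β hβ =>
      mul_nonneg (mul_nonneg (hp α hα).le (hp β hβ).le) (sq_nonneg _)) ⟨α₀, hα₀, ?_⟩
    refine Finset.sum_pos' (fun β hβ =>
      mul_nonneg (mul_nonneg (hp α₀ hα₀).le (hp β hβ).le) (sq_nonneg _)) ⟨β₀, hβ₀, ?_⟩
    exact mul_pos (mul_pos (hp _ hα₀) (hp _ hβ₀))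
      (pow_two_pos_of_ne_zero (sub_ne_zero.2 hne))
  linarith

private lemma mem_finset_sum_sets {ι E : Type*} [DecidableEq ι] [AddCommMonoid E] (S : Finset ι)
    (f : ι → Set E) (q : E) (hq : q ∈ ∑ i ∈ S, f i) :
    ∃ g : ι → E, (∀ i ∈ S, g i ∈ f i) ∧ q = ∑ i ∈ S, g i := by
  induction S using Finset.cons_induction generalizing q with
  | empty =>
    refine ⟨fun _ => 0, by simp, ?_⟩
    simpa [Set.mem_zero] using hq
  | cons a S ha ih =>
    rw [Finset.sum_cons, Set.mem_add] at hq
    obtain ⟨u, hu, v, hv, huv⟩ := hq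
    obtain ⟨g, hg, rfl⟩ := ih v hv
    refine ⟨Function.update g a u, ?_, ?_⟩
    · intro i hi
      by_cases hia : i = a
      · subst hia; simpa using hu
      · rw [Function.update_of_ne hia]
        rcases Finset.mem_cons.1 hi with h | h
        · exact absurd h hia
        · exact hg i h
    · rw [Finset.sum_cons, Function.update_self, ← huv]
      congr 1
      refine Finset.sum_congr rfl fun i hi => ?_
      have hia : i ≠ a := fun hia => ha (by rwa [← hia])
      rw [Function.update_of_ne hia]

section Aux

variable {n ℓ : ℕ}

private def dv (q y : Fin n → ℝ) : ℝ := ∑ j, q j * y j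

private def av (α : Fin n → ℤ) : Fin n → ℝ := fun j => (α j : ℝ)

private lemma dv_add (a b y : Fin n → ℝ) : dv (a + b) y = dv a y + dv b y := by
  simp [dv, add_mul, Finset.sum_add_distrib]

private lemma dv_sub (a b y : Fin n → ℝ) : dv (a - b) y = dv a y - dv b y := by
  simp [dv, sub_mul, Finset.sum_sub_distrib]

private lemma dv_smul (r : ℝ) (a y : Fin n → ℝ) : dv (r • a) y = r * dv a y := by
  simp [dv, Finset.mul_sum, mul_assoc]

private lemma dv_line (a y u : Fin n → ℝ) (t : ℝ) :
    dv a (y + t • u) = dv a y + dv a u * t := by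
  simp only [dv, Pi.add_apply, Pi.smul_apply, smul_eq_mul, mul_add, Finset.sum_add_distrib,
    Finset.sum_mul]
  congr 1
  exact Finset.sum_congr rfl fun j _ => by ring

private lemma dv_zero_right (a : Fin n → ℝ) : dv a 0 = 0 := by simp [dv]

-- the dot product as a linear map in the first argument
private def dvL (u : Fin n → ℝ) : (Fin n → ℝ) →ₗ[ℝ] ℝ where
  toFun q := dv q u
  map_add' a b := dv_add a b u
  map_smul' r a := dv_smul r a u

private noncomputable def EE (A : Fin ℓ → Finset (Fin n → ℤ)) (c : Fin ℓ → (Fin n → ℤ) → ℝ)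
    (i : Fin ℓ) (y : Fin n → ℝ) : ℝ :=
  ∑ α ∈ A i, c i α * Real.exp (dv (av α) y)

private noncomputable def DDsum (A : Fin ℓ → Finset (Fin n → ℤ)) (c : Fin ℓ → (Fin n → ℤ) → ℝ)
    (i : Fin ℓ) (u y : Fin n → ℝ) : ℝ :=
  ∑ α ∈ A i, c i α * dv (av α) u * Real.exp (dv (av α) y)

private noncomputable def Phi (A : Fin ℓ → Finset (Fin n → ℤ)) (c : Fin ℓ → (Fin n → ℤ) → ℝ)
    (s : Fin ℓ → ℝ) (ν : Fin n → ℝ) (y u : Fin n → ℝ) : ℝ :=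
  (∑ i, s i * (DDsum A c i u y / EE A c i y)) - dv ν u

private lemma EE_pos {A : Fin ℓ → Finset (Fin n → ℤ)} {c : Fin ℓ → (Fin n → ℤ) → ℝ}
    (hc : ∀ i, ∀ α ∈ A i, 0 < c i α) (hA : ∀ i, (A i).Nonempty) (i : Fin ℓ) (y : Fin n → ℝ) :
    0 < EE A c i y :=
  Finset.sum_pos (fun α hα => mul_pos (hc i α hα) (Real.exp_pos _)) (hA i)

private lemma EE_line (A : Fin ℓ → Finset (Fin n → ℤ)) (c : Fin ℓ → (Fin n → ℤ) → ℝ)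
    (i : Fin ℓ) (y u : Fin n → ℝ) (t : ℝ) :
    EE A c i (y + t • u)
      = ∑ α ∈ A i, (c i α * Real.exp (dv (av α) y)) * Real.exp (dv (av α) u * t) := by
  refine Finset.sum_congr rfl fun α _ => ?_
  rw [dv_line, Real.exp_add, mul_assoc]

private lemma DDsum_line (A : Fin ℓ → Finset (Fin n → ℤ)) (c : Fin ℓ → (Fin n → ℤ) → ℝ)
    (i : Fin ℓ) (y u : Fin n → ℝ) (t : ℝ) :
    DDsum A c i u (y + t • u)
      = ∑ α ∈ A i, ((c i α * Real.exp (dv (av α) y)) * dv (av α) u)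
          * Real.exp (dv (av α) u * t) := by
  refine Finset.sum_congr rfl fun α _ => ?_
  rw [dv_line, Real.exp_add]
  ring

private lemma hasDerivAt_FF_line {A : Fin ℓ → Finset (Fin n → ℤ)} {c : Fin ℓ → (Fin n → ℤ) → ℝ}
    (hc : ∀ i, ∀ α ∈ A i, 0 < c i α) (hA : ∀ i, (A i).Nonempty)
    (s : Fin ℓ → ℝ) (ν : Fin n → ℝ) (y u : Fin n → ℝ) (t : ℝ) :
    HasDerivAt (fun t : ℝ => (∑ i, s i * Real.log (EE A c i (y + t • u))) - dv ν (y + t • u))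
      (Phi A c s ν (y + t • u) u) t := by
  have hE : ∀ i, HasDerivAt (fun t : ℝ => EE A c i (y + t • u)) (DDsum A c i u (y + t • u)) t := by
    intro i
    have h0 := hasDerivAt_sumexp (A i) (fun α => c i α * Real.exp (dv (av α) y))
      (fun α => dv (av α) u) t
    have he : (fun t : ℝ => EE A c i (y + t • u))
        = fun t => ∑ α ∈ A i, (c i α * Real.exp (dv (av α) y)) * Real.exp (dv (av α) u * t) :=
      funext fun t => EE_line A c i y u t
    rw [he, DDsum_line]
    exact h0
  have hlog : ∀ i, HasDerivAt (fun t : ℝ => s i * Real.log (EE A c i (y + t • u)))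
      (s i * (DDsum A c i u (y + t • u) / EE A c i (y + t • u))) t := by
    intro i
    exact ((hE i).log (EE_pos hc hA i _).ne').const_mul (s i)
  have hlin : HasDerivAt (fun t : ℝ => dv ν (y + t • u)) (dv ν u) t := by
    have : (fun t : ℝ => dv ν (y + t • u)) = fun t => dv ν y + dv ν u * t :=
      funext fun t => dv_line ν y u t
    rw [this]
    simpa using ((hasDerivAt_id t).const_mul (dv ν u)).const_add (dv ν y)
  exact (HasDerivAt.fun_sum fun i _ => hlog i).sub hlin

private lemma dv_single (a : Fin n → ℝ) (j : Fin n) : dv a (Pi.single j 1) = a j := by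
  simp [dv, Pi.single_apply, mul_ite, Finset.sum_ite_eq']

private lemma DDsum_linear (A : Fin ℓ → Finset (Fin n → ℤ)) (c : Fin ℓ → (Fin n → ℤ) → ℝ)
    (i : Fin ℓ) (u y : Fin n → ℝ) :
    DDsum A c i u y = ∑ j, DDsum A c i (Pi.single j 1) y * u j := by
  unfold DDsum
  simp only [Finset.sum_mul]
  rw [Finset.sum_comm]
  refine Finset.sum_congr rfl fun α _ => ?_
  have : ∀ j, c i α * dv (av α) (Pi.single j 1) * Real.exp (dv (av α) y) * u j
      = c i α * Real.exp (dv (av α) y) * (av α j * u j) := fun j => by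
    rw [dv_single]; ring
  simp only [this, ← Finset.mul_sum]
  have : dv (av α) u = ∑ j, av α j * u j := rfl
  rw [this]; ring

private lemma Phi_linear (A : Fin ℓ → Finset (Fin n → ℤ)) (c : Fin ℓ → (Fin n → ℤ) → ℝ)
    (s : Fin ℓ → ℝ) (ν : Fin n → ℝ) (y u : Fin n → ℝ) :
    Phi A c s ν y u = ∑ j, Phi A c s ν y (Pi.single j 1) * u j := by
  unfold Phi
  simp only [sub_mul, Finset.sum_sub_distrib]
  congr 1
  · simp only [Finset.sum_mul]
    rw [Finset.sum_comm]
    refine Finset.sum_congr rfl fun i _ => ?_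
    rw [DDsum_linear A c i u y, Finset.sum_div, Finset.mul_sum]
    refine Finset.sum_congr rfl fun j _ => ?_
    ring
  · simp only [dv_single]
    rfl

private lemma hasDerivAt_Phi_line {A : Fin ℓ → Finset (Fin n → ℤ)} {c : Fin ℓ → (Fin n → ℤ) → ℝ}
    (hc : ∀ i, ∀ α ∈ A i, 0 < c i α) (hA : ∀ i, (A i).Nonempty)
    {s : Fin ℓ → ℝ} (hs : ∀ i, 0 < s i) (ν : Fin n → ℝ) (y u : Fin n → ℝ)
    (hdir : ∃ i, ∃ α ∈ A i, ∃ β ∈ A i, dv (av α) u ≠ dv (av β) u) (t : ℝ) :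
    ∃ R : ℝ, 0 < R ∧ HasDerivAt (fun t : ℝ => Phi A c s ν (y + t • u) u) R t := by
  classical
  set k : Fin ℓ → (Fin n → ℤ) → ℝ := fun i α => c i α * Real.exp (dv (av α) y) with hk
  set b : (Fin n → ℤ) → ℝ := fun α => dv (av α) u with hb
  have hkpos : ∀ i, ∀ α ∈ A i, 0 < k i α := fun i α hα =>
    mul_pos (hc i α hα) (Real.exp_pos _)
  set S : Fin ℓ → ℝ → ℝ := fun i t => ∑ α ∈ A i, k i α * Real.exp (b α * t) with hS
  set S1 : Fin ℓ → ℝ → ℝ := fun i t => ∑ α ∈ A i, (k i α * b α) * Real.exp (b α * t) with hS1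
  set S2 : Fin ℓ → ℝ → ℝ := fun i t => ∑ α ∈ A i, ((k i α * b α) * b α) * Real.exp (b α * t)
    with hS2
  have hSpos : ∀ i t, 0 < S i t := fun i t => sumexp_pos (hA i) (hkpos i) b t
  have hfun : (fun t : ℝ => Phi A c s ν (y + t • u) u)
      = fun t => (∑ i, s i * (S1 i t / S i t)) - dv ν u := by
    funext t
    unfold Phi
    congr 1
    refine Finset.sum_congr rfl fun i _ => ?_
    rw [DDsum_line, EE_line]
  have hnum : ∀ i t, 0 ≤ S2 i t * S i t - S1 i t * S1 i t := by
    intro i t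
    have e2 : S2 i t = ∑ α ∈ A i, (k i α * Real.exp (b α * t)) * b α ^ 2 :=
      Finset.sum_congr rfl fun α _ => by ring
    have e1 : S1 i t = ∑ α ∈ A i, (k i α * Real.exp (b α * t)) * b α :=
      Finset.sum_congr rfl fun α _ => by ring
    have e0 : S i t = ∑ α ∈ A i, (k i α * Real.exp (b α * t)) := rfl
    rw [e2, e1, e0]
    have := gibbs_nonneg (A i) (fun α => k i α * Real.exp (b α * t)) b
      (fun α hα => mul_pos (hkpos i α hα) (Real.exp_pos _))
    nlinarith [this]
  have hDeriv : ∀ i, HasDerivAt (fun t => S1 i t / S i t)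
      ((S2 i t * S i t - S1 i t * S1 i t) / (S i t) ^ 2) t := by
    intro i
    have h1 := hasDerivAt_sumexp (A i) (fun α => k i α * b α) b t
    have h0 := hasDerivAt_sumexp (A i) (k i) b t
    exact h1.div h0 (hSpos i t).ne'
  refine ⟨∑ i, s i * ((S2 i t * S i t - S1 i t * S1 i t) / (S i t) ^ 2), ?_, ?_⟩
  · obtain ⟨i₀, α₀, hα₀, β₀, hβ₀, hne⟩ := hdir
    refine Finset.sum_pos' (fun i _ => mul_nonneg (hs i).le
      (div_nonneg (hnum i t) (sq_nonneg _))) ⟨i₀, Finset.mem_univ _, ?_⟩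
    refine mul_pos (hs i₀) (div_pos ?_ (pow_pos (hSpos i₀ t) 2))
    have e2 : S2 i₀ t = ∑ α ∈ A i₀, (k i₀ α * Real.exp (b α * t)) * b α ^ 2 :=
      Finset.sum_congr rfl fun α _ => by ring
    have e1 : S1 i₀ t = ∑ α ∈ A i₀, (k i₀ α * Real.exp (b α * t)) * b α :=
      Finset.sum_congr rfl fun α _ => by ring
    have e0 : S i₀ t = ∑ α ∈ A i₀, (k i₀ α * Real.exp (b α * t)) := rfl
    rw [e2, e1, e0]
    have := gibbs_pos (A i₀) (fun α => k i₀ α * Real.exp (b α * t)) b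
      (fun α hα => mul_pos (hkpos i₀ α hα) (Real.exp_pos _)) hα₀ hβ₀ hne
    nlinarith [this]
  · rw [hfun]
    exact (HasDerivAt.fun_sum fun i _ => (hDeriv i).const_mul (s i)).sub_const (dv ν u)

private lemma dv_isLinear (u : Fin n → ℝ) : IsLinearMap ℝ (fun q : Fin n → ℝ => dv q u) :=
  ⟨fun a b => dv_add a b u, fun r a => dv_smul r a u⟩

private lemma A_nonempty {A : Fin ℓ → Finset (Fin n → ℤ)} {Δ : Fin ℓ → Set (Fin n → ℝ)}
    (hΔ : ∀ i, Δ i = convexHull ℝ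
      ((fun (α : Fin n → ℤ) (j : Fin n) => (α j : ℝ)) '' (A i : Set (Fin n → ℤ))))
    (hdim : affineSpan ℝ (∑ i, Δ i) = ⊤) (i₀ : Fin ℓ) : (A i₀).Nonempty := by
  classical
  rw [Finset.nonempty_iff_ne_empty]
  intro hemp
  have hΔi : Δ i₀ = ∅ := by rw [hΔ, hemp]; simp
  have hsum : (∑ i, Δ i) = (∅ : Set (Fin n → ℝ)) := by
    ext q
    simp only [Set.mem_empty_iff_false, iff_false]
    intro hq
    obtain ⟨g, hg, -⟩ := mem_finset_sum_sets _ _ q hq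
    exact absurd (hg i₀ (Finset.mem_univ _)) (by rw [hΔi]; exact Set.notMem_empty _)
  rw [hsum, AffineSubspace.span_empty] at hdim
  exact AffineSubspace.bot_ne_top ℝ (Fin n → ℝ) (Fin n → ℝ) hdim

private lemma direction_exists {A : Fin ℓ → Finset (Fin n → ℤ)} {Δ : Fin ℓ → Set (Fin n → ℝ)}
    (hΔ : ∀ i, Δ i = convexHull ℝ
      ((fun (α : Fin n → ℤ) (j : Fin n) => (α j : ℝ)) '' (A i : Set (Fin n → ℤ))))
    (hdim : affineSpan ℝ (∑ i, Δ i) = ⊤) {u : Fin n → ℝ} (hu : u ≠ 0) :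
    ∃ i, ∃ α ∈ A i, ∃ β ∈ A i, dv (av α) u ≠ dv (av β) u := by
  classical
  by_contra hcon
  push_neg at hcon
  have hA : ∀ i, (A i).Nonempty := A_nonempty hΔ hdim
  set γ : Fin ℓ → (Fin n → ℤ) := fun i => (hA i).choose with hγ
  have hγmem : ∀ i, γ i ∈ A i := fun i => (hA i).choose_spec
  set T : ℝ := ∑ i, dv (av (γ i)) u with hT
  -- every element of the Minkowski sum lies on the hyperplane dv · u = T
  have hhyp : ∀ q ∈ (∑ i, Δ i), dv q u = T := by
    intro q hq
    obtain ⟨g, hg, rfl⟩ := mem_finset_sum_sets _ _ q hq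
    have hdvsum : dv (∑ i, g i) u = ∑ i, dv (g i) u := by
      simp only [dv, Finset.sum_apply, Finset.sum_mul]
      exact Finset.sum_comm
    rw [hdvsum, hT]
    refine Finset.sum_congr rfl fun i _ => ?_
    have hgi := hg i (Finset.mem_univ i)
    rw [hΔ i] at hgi
    have hsub : ((fun (α : Fin n → ℤ) (j : Fin n) => (α j : ℝ)) '' (A i : Set (Fin n → ℤ)))
        ⊆ {w : Fin n → ℝ | dv w u = dv (av (γ i)) u} := by
      rintro w ⟨α, hα, rfl⟩
      exact hcon i α hα (γ i) (hγmem i)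
    exact convexHull_min hsub (convex_hyperplane (dv_isLinear u) _) hgi
  -- build the hyperplane as an affine subspace
  set Q : AffineSubspace ℝ (Fin n → ℝ) :=
    { carrier := {q : Fin n → ℝ | dv q u = T}
      smul_vsub_vadd_mem' := by
        intro r p1 p2 p3 h1 h2 h3
        simp only [Set.mem_setOf_eq] at h1 h2 h3 ⊢
        rw [vsub_eq_sub, vadd_eq_add, dv_add, dv_smul, dv_sub, h1, h2, h3]
        ring } with hQ
  have hle : affineSpan ℝ (∑ i, Δ i) ≤ Q := affineSpan_le.mpr hhyp
  rw [hdim] at hle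
  have h0 : dv (0 : Fin n → ℝ) u = T := hle (AffineSubspace.mem_top ℝ (Fin n → ℝ) 0)
  have hu2 : dv u u = T := hle (AffineSubspace.mem_top ℝ (Fin n → ℝ) u)
  have h0' : dv (0 : Fin n → ℝ) u = 0 := by simp [dv]
  have huu : 0 < dv u u := by
    obtain ⟨j, hj⟩ : ∃ j, u j ≠ 0 := by
      by_contra hj
      push_neg at hj
      exact hu (funext hj)
    exact Finset.sum_pos' (fun j _ => mul_self_nonneg (u j))
      ⟨j, Finset.mem_univ j, mul_self_pos.mpr hj⟩
  rw [hu2, ← h0, h0'] at huu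
  exact lt_irrefl 0 huu

set_option maxHeartbeats 1000000 in
private lemma exists_crit {A : Fin ℓ → Finset (Fin n → ℤ)} {c : Fin ℓ → (Fin n → ℤ) → ℝ}
    (hc : ∀ i, ∀ α ∈ A i, 0 < c i α) {Δ : Fin ℓ → Set (Fin n → ℝ)}
    (hΔ : ∀ i, Δ i = convexHull ℝ
      ((fun (α : Fin n → ℤ) (j : Fin n) => (α j : ℝ)) '' (A i : Set (Fin n → ℤ))))
    (hdim : affineSpan ℝ (∑ i, Δ i) = ⊤)
    {s : Fin ℓ → ℝ} (hs : ∀ i, 0 < s i) {ν : Fin n → ℝ}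
    (hν : ν ∈ interior (∑ i, s i • Δ i)) :
    ∃ y : Fin n → ℝ, ∀ j, Phi A c s ν y (Pi.single j 1) = 0 := by
  classical
  have hA : ∀ i, (A i).Nonempty := A_nonempty hΔ hdim
  set FF : (Fin n → ℝ) → ℝ := fun y => (∑ i, s i * Real.log (EE A c i y)) - dv ν y with hFF
  obtain ⟨ε, hε, hball⟩ : ∃ ε > 0, Metric.ball ν ε ⊆ (∑ i, s i • Δ i) := by
    rw [mem_interior_iff_mem_nhds] at hν
    exact Metric.mem_nhds_iff.1 hν
  set C : Fin ℓ → ℝ := fun i => (A i).inf' (hA i) (fun α => Real.log (c i α)) with hC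
  set C' : ℝ := ∑ i, s i * C i with hC'
  have hsupp : ∀ i, ∀ y : Fin n → ℝ, ∀ q ∈ Δ i, dv q y ≤ Real.log (EE A c i y) - C i := by
    intro i y q hq
    rw [hΔ i] at hq
    have hsub : ((fun (α : Fin n → ℤ) (j : Fin n) => (α j : ℝ)) '' (A i : Set (Fin n → ℤ)))
        ⊆ {w : Fin n → ℝ | dv w y ≤ Real.log (EE A c i y) - C i} := by
      rintro w ⟨α, hα, rfl⟩
      have h1 : c i α * Real.exp (dv (av α) y) ≤ EE A c i y := by
        unfold EE
        exact Finset.single_le_sum (f := fun β => c i β * Real.exp (dv (av β) y))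
          (fun β hβ => mul_nonneg (hc i β hβ).le (Real.exp_pos _).le) hα
      have h2 : Real.log (c i α) + dv (av α) y ≤ Real.log (EE A c i y) := by
        have hpos : 0 < c i α * Real.exp (dv (av α) y) := mul_pos (hc i α hα) (Real.exp_pos _)
        have h2' := Real.log_le_log hpos h1
        rwa [Real.log_mul (hc i α hα).ne' (Real.exp_pos _).ne', Real.log_exp] at h2'
      have h3 : C i ≤ Real.log (c i α) := Finset.inf'_le _ hα
      simp only [Set.mem_setOf_eq]
      show dv (av α) y ≤ _
      linarith
    exact convexHull_min hsub (convex_halfSpace_le (dv_isLinear y) _) hq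
  have hPmem : ∀ p ∈ (∑ i, s i • Δ i), ∀ y : Fin n → ℝ,
      dv p y + C' ≤ ∑ i, s i * Real.log (EE A c i y) := by
    intro p hp y
    obtain ⟨g, hg, rfl⟩ := mem_finset_sum_sets _ _ p hp
    have hdv : dv (∑ i, g i) y = ∑ i, dv (g i) y := by
      simp only [dv, Finset.sum_apply, Finset.sum_mul]
      exact Finset.sum_comm
    rw [hdv, hC', ← Finset.sum_add_distrib]
    refine Finset.sum_le_sum fun i _ => ?_
    obtain ⟨q, hq, hqe⟩ := Set.mem_smul_set.1 (hg i (Finset.mem_univ i))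
    rw [← hqe, dv_smul]
    have h2 : dv q y + C i ≤ Real.log (EE A c i y) := by
      have := hsupp i y q hq; linarith
    calc s i * dv q y + s i * C i = s i * (dv q y + C i) := by ring
      _ ≤ s i * Real.log (EE A c i y) := mul_le_mul_of_nonneg_left h2 (hs i).le
  have hgrow : ∀ y : Fin n → ℝ, ε / 2 * ‖y‖ + C' ≤ FF y := by
    intro y
    by_cases hy : y = 0
    · subst hy
      have hνP : ν ∈ (∑ i, s i • Δ i) := hball (Metric.mem_ball_self hε)
      have h1 := hPmem ν hνP 0
      have h2 : FF 0 = (∑ i, s i * Real.log (EE A c i 0)) - dv ν 0 := rfl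
      rw [dv_zero_right] at h1 h2
      simp only [norm_zero, mul_zero, zero_add]
      linarith
    · obtain ⟨jw, hjw⟩ : ∃ j, y j ≠ 0 := by
        by_contra hj
        push_neg at hj
        exact hy (funext hj)
      obtain ⟨j₀, -, hj₀⟩ := Finset.exists_mem_eq_sup (Finset.univ : Finset (Fin n))
        ⟨jw, Finset.mem_univ jw⟩ (fun b => ‖y b‖₊)
      have hnorm : ‖y‖ = |y j₀| := by
        rw [Pi.norm_def, hj₀, coe_nnnorm, Real.norm_eq_abs]
      set r : ℝ := if 0 ≤ y j₀ then ε / 2 else -(ε / 2) with hr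
      have hε2 : (0:ℝ) < ε / 2 := half_pos hε
      have hrabs : |r| = ε / 2 := by
        rw [hr]; split_ifs <;> simp [abs_of_pos hε2, abs_of_nonneg hε2.le]
      set p : Fin n → ℝ := ν + Pi.single j₀ r with hp
      have hpball : p ∈ Metric.ball ν ε := by
        rw [Metric.mem_ball, dist_eq_norm, hp, add_sub_cancel_left, Pi.norm_single,
          Real.norm_eq_abs, hrabs]
        linarith
      have hsingle : dv (Pi.single j₀ r) y = r * y j₀ := by
        simp [dv, Pi.single_apply, ite_mul, Finset.sum_ite_eq']
      have hdvp : dv p y = dv ν y + r * y j₀ := by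
        rw [hp, dv_add, hsingle]
      have hry : r * y j₀ = ε / 2 * ‖y‖ := by
        rw [hnorm, hr]
        split_ifs with h
        · rw [abs_of_nonneg h]
        · rw [abs_of_neg (lt_of_not_ge h)]; ring
      have h1 := hPmem p (hball hpball) y
      rw [hdvp, hry] at h1
      have h2 : FF y = (∑ i, s i * Real.log (EE A c i y)) - dv ν y := rfl
      linarith
  have hEcont : ∀ i, Continuous (EE A c i) := by
    intro i
    refine continuous_finset_sum _ fun α _ => Continuous.mul continuous_const ?_
    exact Real.continuous_exp.comp (continuous_finset_sum _ fun m _ =>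
      continuous_const.mul (continuous_apply m))
  have hFcont : Continuous FF := by
    refine Continuous.sub ?_ ?_
    · exact continuous_finset_sum _ fun i _ => continuous_const.mul ((hEcont i).log
        (fun y => (EE_pos hc hA i y).ne'))
    · exact continuous_finset_sum _ fun j _ => continuous_const.mul (continuous_apply j)
  set R : ℝ := max 1 ((FF 0 - C' + 1) * (2 / ε)) with hR
  have hR0 : (0:ℝ) ≤ R := le_trans zero_le_one (le_max_left _ _)
  obtain ⟨y₀, hy₀K, hmin⟩ := (isCompact_closedBall (0 : Fin n → ℝ) R).exists_isMinOn
    ⟨0, Metric.mem_closedBall_self hR0⟩ hFcont.continuousOn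
  have hglobal : ∀ y, FF y₀ ≤ FF y := by
    intro y
    by_cases hyK : y ∈ Metric.closedBall (0 : Fin n → ℝ) R
    · exact hmin hyK
    · have hnorm : R < ‖y‖ := by
        rw [Metric.mem_closedBall, dist_zero_right, not_le] at hyK; exact hyK
      have h1 : (FF 0 - C' + 1) * (2 / ε) < ‖y‖ :=
        lt_of_le_of_lt (le_max_right _ _) hnorm
      have h5 : ε / 2 * ((FF 0 - C' + 1) * (2 / ε)) = FF 0 - C' + 1 := by
        field_simp
      have h2 : FF 0 - C' + 1 ≤ ε / 2 * ‖y‖ := by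
        have := mul_lt_mul_of_pos_left h1 (half_pos hε)
        linarith
      have h3 := hgrow y
      have h4 : FF y₀ ≤ FF 0 := hmin (Metric.mem_closedBall_self hR0)
      clear_value FF C C' R
      linarith
  refine ⟨y₀, fun j => ?_⟩
  set u : Fin n → ℝ := Pi.single j 1 with hu
  have hloc : IsLocalMin (fun t : ℝ => (∑ i, s i * Real.log (EE A c i (y₀ + t • u)))
      - dv ν (y₀ + t • u)) 0 := by
    refine Filter.Eventually.of_forall fun t => ?_
    show (∑ i, s i * Real.log (EE A c i (y₀ + (0:ℝ) • u))) - dv ν (y₀ + (0:ℝ) • u)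
        ≤ (∑ i, s i * Real.log (EE A c i (y₀ + t • u))) - dv ν (y₀ + t • u)
    have e0 : (∑ i, s i * Real.log (EE A c i (y₀ + (0:ℝ) • u)))
        - dv ν (y₀ + (0:ℝ) • u) = FF y₀ := by
      simp only [zero_smul, add_zero]
      rfl
    have e1 : (∑ i, s i * Real.log (EE A c i (y₀ + t • u)))
        - dv ν (y₀ + t • u) = FF (y₀ + t • u) := rfl
    rw [e0, e1]
    exact hglobal _
  have hzero := hloc.hasDerivAt_eq_zero (hasDerivAt_FF_line hc hA s ν y₀ u 0)
  simpa using hzero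

private lemma existsUnique_crit {A : Fin ℓ → Finset (Fin n → ℤ)} {c : Fin ℓ → (Fin n → ℤ) → ℝ}
    (hc : ∀ i, ∀ α ∈ A i, 0 < c i α) {Δ : Fin ℓ → Set (Fin n → ℝ)}
    (hΔ : ∀ i, Δ i = convexHull ℝ
      ((fun (α : Fin n → ℤ) (j : Fin n) => (α j : ℝ)) '' (A i : Set (Fin n → ℤ))))
    (hdim : affineSpan ℝ (∑ i, Δ i) = ⊤)
    {s : Fin ℓ → ℝ} (hs : ∀ i, 0 < s i) {ν : Fin n → ℝ}
    (hν : ν ∈ interior (∑ i, s i • Δ i)) :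
    ∃! y : Fin n → ℝ, ∀ j, Phi A c s ν y (Pi.single j 1) = 0 := by
  have hA : ∀ i, (A i).Nonempty := A_nonempty hΔ hdim
  obtain ⟨y₀, hy₀⟩ := exists_crit hc hΔ hdim hs hν
  refine ⟨y₀, hy₀, fun y' hy' => ?_⟩
  by_contra hne
  set u : Fin n → ℝ := y₀ - y' with hu
  have hu0 : u ≠ 0 := sub_ne_zero.2 fun h => hne h.symm
  have hdir := direction_exists hΔ hdim hu0
  set H : ℝ → ℝ := fun t => Phi A c s ν (y' + t • u) u with hH
  have hd : ∀ t, 0 < deriv H t := by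
    intro t
    obtain ⟨R, hR, hdR⟩ := hasDerivAt_Phi_line hc hA hs ν y' u hdir t
    rw [hH, hdR.deriv]
    exact hR
  have hmono : StrictMono H := strictMono_of_deriv_pos hd
  have h0 : H 0 = 0 := by
    rw [hH]
    show Phi A c s ν (y' + (0:ℝ) • u) u = 0
    rw [zero_smul, add_zero, Phi_linear]
    simp [hy']
  have h1 : H 1 = 0 := by
    rw [hH]
    show Phi A c s ν (y' + (1:ℝ) • u) u = 0
    have e : y' + (1:ℝ) • u = y₀ := by rw [hu, one_smul]; abel
    rw [e, Phi_linear]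
    simp [hy₀]
  have := hmono (show (0:ℝ) < 1 by norm_num)
  rw [h0, h1] at this
  exact lt_irrefl 0 this

end Aux

/-- unique positive critical point. For Laurent polynomials with
positive coefficients, `s ∈ ℝ^ℓ_{>0}` and `ν ∈ int(P(s))`, there is exactly one point
`a ∈ ℝⁿ₊` satisfying the critical point equations
`ν_j = a_j · Σᵢ sᵢ (∂fᵢ/∂x_j)(a)/fᵢ(a)`. -/
theorem stmt_6 (n ℓ : ℕ) (A : Fin ℓ → Finset (Fin n → ℤ))
    (c : Fin ℓ → (Fin n → ℤ) → ℝ) (hc : ∀ i, ∀ α ∈ A i, 0 < c i α)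
    (f : Fin ℓ → (Fin n → ℝ) → ℝ)
    (hf : ∀ i x, f i x = ∑ α ∈ A i, c i α * ∏ j, x j ^ (α j))
    -- `pd i j` is the partial derivative `∂fᵢ/∂x_j` (valid on `ℝⁿ₊`)
    (pd : Fin ℓ → Fin n → (Fin n → ℝ) → ℝ)
    (hpd : ∀ i j x, pd i j x = ∑ α ∈ A i, c i α * (α j : ℝ) * (∏ k, x k ^ (α k)) / x j)
    (Δ : Fin ℓ → Set (Fin n → ℝ))
    (hΔ : ∀ i, Δ i = convexHull ℝ
      ((fun (α : Fin n → ℤ) (j : Fin n) => (α j : ℝ)) '' (A i : Set (Fin n → ℤ))))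
    (hdim : affineSpan ℝ (∑ i, Δ i) = ⊤)
    (s : Fin ℓ → ℝ) (hs : ∀ i, 0 < s i) (ν : Fin n → ℝ)
    (hν : ν ∈ interior (∑ i, s i • Δ i)) :
    ∃! a : Fin n → ℝ, (∀ j, 0 < a j) ∧
      ∀ j, ν j = a j * ∑ i, s i * (pd i j a / f i a) := by
  classical
  obtain ⟨y₀, hy₀, huniq⟩ := existsUnique_crit hc hΔ hdim hs hν
  have hprod : ∀ (y : Fin n → ℝ) (α : Fin n → ℤ),
      (∏ m, (Real.exp (y m)) ^ (α m)) = Real.exp (dv (av α) y) := by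
    intro y α
    calc ∏ m, Real.exp (y m) ^ α m = ∏ m, Real.exp ((α m : ℝ) * y m) :=
          Finset.prod_congr rfl fun m _ => exp_zpow' (y m) (α m)
      _ = Real.exp (∑ m, (α m : ℝ) * y m) := (Real.exp_sum _ _).symm
      _ = Real.exp (dv (av α) y) := rfl
  have hfa : ∀ (y : Fin n → ℝ) i, f i (fun m => Real.exp (y m)) = EE A c i y := by
    intro y i
    simp only [hf]
    unfold EE
    exact Finset.sum_congr rfl fun α _ => by rw [hprod]
  have hpda : ∀ (y : Fin n → ℝ) i j,
      Real.exp (y j) * pd i j (fun m => Real.exp (y m)) = DDsum A c i (Pi.single j 1) y := by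
    intro y i j
    simp only [hpd, Finset.mul_sum]
    unfold DDsum
    refine Finset.sum_congr rfl fun α _ => ?_
    rw [hprod, dv_single]
    have hav : av α j = (α j : ℝ) := rfl
    rw [hav]
    have hne : Real.exp (y j) ≠ 0 := (Real.exp_pos _).ne'
    field_simp
  have hkey : ∀ (y : Fin n → ℝ) (j : Fin n),
      Real.exp (y j) * ∑ i, s i * (pd i j (fun m => Real.exp (y m)) / f i (fun m => Real.exp (y m)))
        = ∑ i, s i * (DDsum A c i (Pi.single j 1) y / EE A c i y) := by
    intro y j
    rw [Finset.mul_sum]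
    refine Finset.sum_congr rfl fun i _ => ?_
    rw [hfa y i, ← hpda y i j]
    ring
  refine ⟨fun m => Real.exp (y₀ m), ⟨fun j => Real.exp_pos _, fun j => ?_⟩, ?_⟩
  · have hj := hy₀ j
    unfold Phi at hj
    rw [dv_single, sub_eq_zero] at hj
    show ν j = Real.exp (y₀ j) * _
    rw [hkey y₀ j]
    exact hj.symm
  · rintro a ⟨hapos, haeq⟩
    have hj : ∀ j, ν j = Real.exp (Real.log (a j))
        * ∑ i, s i * (pd i j (fun m => Real.exp (Real.log (a m)))
            / f i (fun m => Real.exp (Real.log (a m)))) := by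
      intro j
      have e : (fun m => Real.exp (Real.log (a m))) = a := funext fun m => Real.exp_log (hapos m)
      rw [e, Real.exp_log (hapos j)]
      exact haeq j
    have heq : ∀ j, Phi A c s ν (fun m => Real.log (a m)) (Pi.single j 1) = 0 := by
      intro j
      unfold Phi
      rw [dv_single, sub_eq_zero, ← hkey (fun m => Real.log (a m)) j]
      exact (hj j).symm
    have hyy := huniq (fun m => Real.log (a m)) heq
    funext m
    calc a m = Real.exp (Real.log (a m)) := (Real.exp_log (hapos m)).symm
      _ = Real.exp (y₀ m) := by
          rw [show Real.log (a m) = y₀ m from congrFun hyy m]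
end

section
/- Let f₁,…,f_ℓ be Laurent polynomials in n variables with positive real coefficients such that Δ(f₁) + ⋯ + Δ(f_ℓ) has dimension n, let s ∈ ℝ_{>0}^ℓ and ν ∈ ℝ^n, and set L(x) = f₁(x)^{−s₁}⋯f_ℓ(x)^{−s_ℓ} x^ν. Then the function z ↦ log L(e^{z₁},…,e^{z_n}) = Σ_j ν_j z_j − Σ_i s_i log f_i(e^{z₁},…,e^{z_n}) is strictly concave on ℝ^n. -/
open Pointwise


lemma aux_amgm_le {r s t u : ℝ} (hr : 0 < r) (hs : 0 < s) (ht : 0 < t) (hu : 0 < u)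
    (htu : t + u = 1) :
    Real.exp (t * Real.log r + u * Real.log s) ≤ t * r + u * s := by
  have h := strictConcaveOn_log_Ioi.concaveOn.2 (Set.mem_Ioi.2 hr) (Set.mem_Ioi.2 hs)
    ht.le hu.le htu
  simp only [smul_eq_mul] at h
  calc Real.exp (t * Real.log r + u * Real.log s) ≤ Real.exp (Real.log (t * r + u * s)) :=
        Real.exp_le_exp.2 h
    _ = t * r + u * s := Real.exp_log (by positivity)

lemma aux_amgm_lt {r s t u : ℝ} (hr : 0 < r) (hs : 0 < s) (ht : 0 < t) (hu : 0 < u)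
    (htu : t + u = 1) (hrs : r ≠ s) :
    Real.exp (t * Real.log r + u * Real.log s) < t * r + u * s := by
  have h := strictConcaveOn_log_Ioi.2 (Set.mem_Ioi.2 hr) (Set.mem_Ioi.2 hs) hrs ht hu htu
  simp only [smul_eq_mul] at h
  calc Real.exp (t * Real.log r + u * Real.log s) < Real.exp (Real.log (t * r + u * s)) :=
        Real.exp_lt_exp.2 h
    _ = t * r + u * s := Real.exp_log (by positivity)

lemma aux_term_eq {ι : Type*} (T : Finset ι) (p q : ι → ℝ)
    (hp : ∀ α ∈ T, 0 < p α) (hq : ∀ α ∈ T, 0 < q α) {t u : ℝ} (htu : t + u = 1)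
    {α : ι} (hα : α ∈ T) :
    Real.exp (t * Real.log (p α) + u * Real.log (q α)) =
      Real.exp (t * Real.log (∑ β ∈ T, p β) + u * Real.log (∑ β ∈ T, q β)) *
        Real.exp (t * Real.log (p α / (∑ β ∈ T, p β)) + u * Real.log (q α / (∑ β ∈ T, q β))) := by
  have hP : (0:ℝ) < ∑ β ∈ T, p β := Finset.sum_pos hp ⟨α, hα⟩
  have hQ : (0:ℝ) < ∑ β ∈ T, q β := Finset.sum_pos hq ⟨α, hα⟩
  rw [← Real.exp_add, Real.log_div (hp α hα).ne' hP.ne', Real.log_div (hq α hα).ne' hQ.ne']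
  ring_nf

lemma aux_holder {ι : Type*} (T : Finset ι) (hT : T.Nonempty) (p q : ι → ℝ)
    (hp : ∀ α ∈ T, 0 < p α) (hq : ∀ α ∈ T, 0 < q α)
    {t u : ℝ} (ht : 0 < t) (hu : 0 < u) (htu : t + u = 1) :
    ∑ α ∈ T, Real.exp (t * Real.log (p α) + u * Real.log (q α)) ≤
      Real.exp (t * Real.log (∑ α ∈ T, p α) + u * Real.log (∑ α ∈ T, q α)) := by
  set P := ∑ α ∈ T, p α with hPdef
  set Q := ∑ α ∈ T, q α with hQdef
  have hP : (0:ℝ) < P := Finset.sum_pos hp hT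
  have hQ : (0:ℝ) < Q := Finset.sum_pos hq hT
  set E := Real.exp (t * Real.log P + u * Real.log Q) with hEdef
  have hE : (0:ℝ) < E := Real.exp_pos _
  calc ∑ α ∈ T, Real.exp (t * Real.log (p α) + u * Real.log (q α))
      ≤ ∑ α ∈ T, E * (t * (p α / P) + u * (q α / Q)) := by
        refine Finset.sum_le_sum fun α hα => ?_
        rw [aux_term_eq T p q hp hq htu hα]
        exact mul_le_mul_of_nonneg_left
          (aux_amgm_le (div_pos (hp α hα) hP) (div_pos (hq α hα) hQ) ht hu htu) hE.le
    _ = E := by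
        rw [← Finset.mul_sum, Finset.sum_add_distrib]
        simp only [← Finset.mul_sum, ← Finset.sum_div]
        rw [← hPdef, ← hQdef, div_self hP.ne', div_self hQ.ne']
        rw [mul_one, mul_one, htu, mul_one]

lemma aux_holder_lt {ι : Type*} (T : Finset ι) (p q : ι → ℝ)
    (hp : ∀ α ∈ T, 0 < p α) (hq : ∀ α ∈ T, 0 < q α)
    {t u : ℝ} (ht : 0 < t) (hu : 0 < u) (htu : t + u = 1)
    (hne : ∃ α ∈ T, p α * (∑ β ∈ T, q β) ≠ q α * (∑ β ∈ T, p β)) :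
    ∑ α ∈ T, Real.exp (t * Real.log (p α) + u * Real.log (q α)) <
      Real.exp (t * Real.log (∑ α ∈ T, p α) + u * Real.log (∑ α ∈ T, q α)) := by
  obtain ⟨α₀, hα₀, hne⟩ := hne
  have hT : T.Nonempty := ⟨α₀, hα₀⟩
  set P := ∑ α ∈ T, p α with hPdef
  set Q := ∑ α ∈ T, q α with hQdef
  have hP : (0:ℝ) < P := Finset.sum_pos hp hT
  have hQ : (0:ℝ) < Q := Finset.sum_pos hq hT
  set E := Real.exp (t * Real.log P + u * Real.log Q) with hEdef
  have hE : (0:ℝ) < E := Real.exp_pos _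
  calc ∑ α ∈ T, Real.exp (t * Real.log (p α) + u * Real.log (q α))
      < ∑ α ∈ T, E * (t * (p α / P) + u * (q α / Q)) := by
        refine Finset.sum_lt_sum (fun α hα => ?_) ⟨α₀, hα₀, ?_⟩
        · rw [aux_term_eq T p q hp hq htu hα]
          exact mul_le_mul_of_nonneg_left
            (aux_amgm_le (div_pos (hp α hα) hP) (div_pos (hq α hα) hQ) ht hu htu) hE.le
        · rw [aux_term_eq T p q hp hq htu hα₀]
          refine mul_lt_mul_of_pos_left
            (aux_amgm_lt (div_pos (hp α₀ hα₀) hP) (div_pos (hq α₀ hα₀) hQ) ht hu htu ?_) hE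
          intro h
          exact hne ((div_eq_div_iff hP.ne' hQ.ne').1 h)
    _ = E := by
        rw [← Finset.mul_sum, Finset.sum_add_distrib]
        simp only [← Finset.mul_sum, ← Finset.sum_div]
        rw [← hPdef, ← hQdef, div_self hP.ne', div_self hQ.ne']
        rw [mul_one, mul_one, htu, mul_one]

section
variable {ι : Type*}


lemma aux_integrand (c a b : ι → ℝ) {t u : ℝ} (htu : t + u = 1) (T : Finset ι)
    (hc : ∀ α ∈ T, 0 < c α) :
    ∑ α ∈ T, c α * Real.exp (t * a α + u * b α) =
      ∑ α ∈ T, Real.exp (t * Real.log (c α * Real.exp (a α)) +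
        u * Real.log (c α * Real.exp (b α))) := by
  refine Finset.sum_congr rfl fun α hα => ?_
  rw [Real.log_mul (hc α hα).ne' (Real.exp_pos _).ne',
      Real.log_mul (hc α hα).ne' (Real.exp_pos _).ne', Real.log_exp, Real.log_exp]
  rw [show t * (Real.log (c α) + a α) + u * (Real.log (c α) + b α)
      = (t + u) * Real.log (c α) + (t * a α + u * b α) by ring, htu, one_mul]
  conv_rhs => rw [Real.exp_add]
  rw [Real.exp_log (hc α hα)]

lemma aux_logsum_le (T : Finset ι) (c a b : ι → ℝ) (hc : ∀ α ∈ T, 0 < c α)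
    {t u : ℝ} (ht : 0 < t) (hu : 0 < u) (htu : t + u = 1) :
    Real.log (∑ α ∈ T, c α * Real.exp (t * a α + u * b α)) ≤
      t * Real.log (∑ α ∈ T, c α * Real.exp (a α)) +
        u * Real.log (∑ α ∈ T, c α * Real.exp (b α)) := by
  rcases T.eq_empty_or_nonempty with rfl | hT
  · simp
  have hp : ∀ α ∈ T, 0 < c α * Real.exp (a α) :=
    fun α hα => mul_pos (hc α hα) (Real.exp_pos _)
  have hq : ∀ α ∈ T, 0 < c α * Real.exp (b α) :=
    fun α hα => mul_pos (hc α hα) (Real.exp_pos _)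
  rw [aux_integrand c a b htu T hc]
  calc Real.log (∑ α ∈ T, Real.exp (t * Real.log (c α * Real.exp (a α)) +
          u * Real.log (c α * Real.exp (b α))))
      ≤ Real.log (Real.exp (t * Real.log (∑ α ∈ T, c α * Real.exp (a α)) +
          u * Real.log (∑ α ∈ T, c α * Real.exp (b α)))) :=
        Real.log_le_log (Finset.sum_pos (fun α hα => Real.exp_pos _) hT)
          (aux_holder T hT _ _ hp hq ht hu htu)
    _ = _ := Real.log_exp _

lemma aux_logsum_lt (T : Finset ι) (c a b : ι → ℝ) (hc : ∀ α ∈ T, 0 < c α)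
    {t u : ℝ} (ht : 0 < t) (hu : 0 < u) (htu : t + u = 1)
    (hw : ∃ α ∈ T, ∃ β ∈ T, a α - b α ≠ a β - b β) :
    Real.log (∑ α ∈ T, c α * Real.exp (t * a α + u * b α)) <
      t * Real.log (∑ α ∈ T, c α * Real.exp (a α)) +
        u * Real.log (∑ α ∈ T, c α * Real.exp (b α)) := by
  obtain ⟨α₀, hα₀, β₀, hβ₀, hab⟩ := hw
  have hT : T.Nonempty := ⟨α₀, hα₀⟩
  have hp : ∀ α ∈ T, 0 < c α * Real.exp (a α) :=
    fun α hα => mul_pos (hc α hα) (Real.exp_pos _)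
  have hq : ∀ α ∈ T, 0 < c α * Real.exp (b α) :=
    fun α hα => mul_pos (hc α hα) (Real.exp_pos _)
  have hP : (0:ℝ) < ∑ α ∈ T, c α * Real.exp (a α) := Finset.sum_pos hp hT
  have hQ : (0:ℝ) < ∑ α ∈ T, c α * Real.exp (b α) := Finset.sum_pos hq hT
  have hne : ∃ α ∈ T, (c α * Real.exp (a α)) * (∑ β ∈ T, c β * Real.exp (b β)) ≠
      (c α * Real.exp (b α)) * (∑ β ∈ T, c β * Real.exp (a β)) := by
    by_contra hcon
    push_neg at hcon
    have h1 := hcon α₀ hα₀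
    have h2 := hcon β₀ hβ₀
    -- derive (c α₀ e^{aα₀})(c β₀ e^{bβ₀}) = (c α₀ e^{bα₀})(c β₀ e^{aβ₀})
    have key : (c α₀ * Real.exp (a α₀)) * (c β₀ * Real.exp (b β₀)) =
        (c α₀ * Real.exp (b α₀)) * (c β₀ * Real.exp (a β₀)) := by
      have h3 : (c α₀ * Real.exp (a α₀)) * (c β₀ * Real.exp (b β₀)) *
          ((∑ β ∈ T, c β * Real.exp (b β)) * (∑ β ∈ T, c β * Real.exp (a β))) =
          (c α₀ * Real.exp (b α₀)) * (c β₀ * Real.exp (a β₀)) *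
          ((∑ β ∈ T, c β * Real.exp (b β)) * (∑ β ∈ T, c β * Real.exp (a β))) := by
        calc (c α₀ * Real.exp (a α₀)) * (c β₀ * Real.exp (b β₀)) *
            ((∑ β ∈ T, c β * Real.exp (b β)) * (∑ β ∈ T, c β * Real.exp (a β)))
            = ((c α₀ * Real.exp (a α₀)) * (∑ β ∈ T, c β * Real.exp (b β))) *
              ((c β₀ * Real.exp (b β₀)) * (∑ β ∈ T, c β * Real.exp (a β))) := by ring
          _ = ((c α₀ * Real.exp (b α₀)) * (∑ β ∈ T, c β * Real.exp (a β))) *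
              ((c β₀ * Real.exp (a β₀)) * (∑ β ∈ T, c β * Real.exp (b β))) := by
              rw [h1]
              have h2' : (c β₀ * Real.exp (b β₀)) * (∑ β ∈ T, c β * Real.exp (a β)) =
                  (c β₀ * Real.exp (a β₀)) * (∑ β ∈ T, c β * Real.exp (b β)) := by
                have := h2
                field_simp at this ⊢
                linarith [this]
              rw [h2']
          _ = (c α₀ * Real.exp (b α₀)) * (c β₀ * Real.exp (a β₀)) *
              ((∑ β ∈ T, c β * Real.exp (b β)) * (∑ β ∈ T, c β * Real.exp (a β))) := by ring
      exact mul_right_cancel₀ (by positivity) h3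
    have key2 : Real.exp (a α₀ + b β₀) = Real.exp (b α₀ + a β₀) := by
      have hca := (hc α₀ hα₀).ne'
      have hcb := (hc β₀ hβ₀).ne'
      rw [Real.exp_add, Real.exp_add]
      have : c α₀ * c β₀ * (Real.exp (a α₀) * Real.exp (b β₀)) =
          c α₀ * c β₀ * (Real.exp (b α₀) * Real.exp (a β₀)) := by linarith [key]
      exact mul_left_cancel₀ (by positivity) this
    have := Real.exp_injective key2
    apply hab
    linarith
  rw [aux_integrand c a b htu T hc]
  calc Real.log (∑ α ∈ T, Real.exp (t * Real.log (c α * Real.exp (a α)) +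
          u * Real.log (c α * Real.exp (b α))))
      < Real.log (Real.exp (t * Real.log (∑ α ∈ T, c α * Real.exp (a α)) +
          u * Real.log (∑ α ∈ T, c α * Real.exp (b α)))) :=
        Real.log_lt_log (Finset.sum_pos (fun α hα => Real.exp_pos _) hT)
          (aux_holder_lt T _ _ hp hq ht hu htu hne)
    _ = _ := Real.log_exp _
end


lemma aux_mem_sum {V : Type*} [AddCommGroup V] [Module ℝ V] (φ : V →ₗ[ℝ] ℝ)
    {ι : Type*} (t : Finset ι) (S : ι → Set V) (k : ι → ℝ)
    (h : ∀ i ∈ t, ∀ p ∈ S i, φ p = k i) :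
    ∀ p ∈ ∑ i ∈ t, S i, φ p = ∑ i ∈ t, k i := by
  induction t using Finset.cons_induction with
  | empty =>
    intro p hp
    simp only [Finset.sum_empty] at hp ⊢
    rw [Set.mem_zero] at hp
    simp [hp]
  | cons a t ha ih =>
    intro p hp
    rw [Finset.sum_cons] at hp
    obtain ⟨x, hx, y, hy, rfl⟩ := Set.mem_add.1 hp
    rw [Finset.sum_cons, map_add, h a (Finset.mem_cons_self a t) x hx,
      ih (fun i hi => h i (Finset.mem_cons_of_mem hi)) y hy]

lemma aux_witness (n ℓ : ℕ) (A : Fin ℓ → Finset (Fin n → ℤ)) (Δ : Fin ℓ → Set (Fin n → ℝ))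
    (hΔ : ∀ i, Δ i = convexHull ℝ
      ((fun (α : Fin n → ℤ) (j : Fin n) => (α j : ℝ)) '' (A i : Set (Fin n → ℤ))))
    (hdim : affineSpan ℝ (∑ i, Δ i) = ⊤) (d : Fin n → ℝ) (hd : d ≠ 0) :
    ∃ i, ∃ α ∈ A i, ∃ β ∈ A i, (∑ j, (α j : ℝ) * d j) ≠ ∑ j, (β j : ℝ) * d j := by
  by_contra hcon
  push_neg at hcon
  set φ : (Fin n → ℝ) →ₗ[ℝ] ℝ :=
    { toFun := fun p => ∑ j, p j * d j
      map_add' := fun p q => by simp [add_mul, Finset.sum_add_distrib]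
      map_smul' := fun r p => by simp [smul_eq_mul, mul_assoc, Finset.mul_sum] } with hφ
  classical
  set k : Fin ℓ → ℝ := fun i =>
    if h : (A i).Nonempty then ∑ j, ((h.choose j : ℤ) : ℝ) * d j else 0 with hk
  have hΔk : ∀ i, ∀ p ∈ Δ i, φ p = k i := by
    intro i
    rw [hΔ i]
    intro p hp
    have hsub : (fun (α : Fin n → ℤ) (j : Fin n) => (α j : ℝ)) '' (A i : Set (Fin n → ℤ)) ⊆
        {x | φ x = k i} := by
      rintro - ⟨α, hα, rfl⟩
      have hne : (A i).Nonempty := ⟨α, hα⟩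
      simp only [Set.mem_setOf_eq, hk, dif_pos hne, hφ, LinearMap.coe_mk, AddHom.coe_mk]
      exact hcon i α hα hne.choose hne.choose_spec
    exact convexHull_min hsub (convex_hyperplane φ.isLinear (k i)) hp
  have hmem : ∀ p ∈ ∑ i, Δ i, φ p = ∑ i, k i :=
    aux_mem_sum φ Finset.univ Δ k (fun i _ => hΔk i)
  have hvs : vectorSpan ℝ (∑ i, Δ i) = ⊤ :=
    AffineSubspace.vectorSpan_eq_top_of_affineSpan_eq_top ℝ _ _ hdim
  have hker : vectorSpan ℝ (∑ i, Δ i) ≤ LinearMap.ker φ := by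
    rw [vectorSpan_def, Submodule.span_le]
    rintro v ⟨p, hp, q, hq, rfl⟩
    simp only [SetLike.mem_coe, LinearMap.mem_ker, vsub_eq_sub, map_sub, hmem p hp, hmem q hq,
      sub_self]
  rw [hvs, top_le_iff] at hker
  have hd0 : φ d = 0 := by
    have : d ∈ LinearMap.ker φ := hker ▸ Submodule.mem_top
    exact LinearMap.mem_ker.1 this
  have hj : ∃ j, d j ≠ 0 := Function.ne_iff.1 hd
  obtain ⟨j, hj⟩ := hj
  have : (0:ℝ) < ∑ j, d j * d j := by
    refine Finset.sum_pos' (fun j _ => mul_self_nonneg _) ⟨j, Finset.mem_univ j, ?_⟩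
    exact mul_self_pos.2 hj
  rw [hφ] at hd0
  simp only [LinearMap.coe_mk, AddHom.coe_mk] at hd0
  rw [hd0] at this
  exact lt_irrefl 0 this



/-- strict concavity of the log-likelihood in exponential coordinates.
For Laurent polynomials `f₁,…,f_ℓ` with positive coefficients whose Minkowski sum of
Newton polytopes is `n`-dimensional, and `s ∈ ℝ^ℓ_{>0}`, `ν ∈ ℝⁿ`, the function
`z ↦ log L(e^{z₁},…,e^{z_n}) = Σ_j ν_j z_j − Σ_i s_i log f_i(e^z)` is strictly concave
on `ℝⁿ`. -/
theorem stmt_8 (n ℓ : ℕ) (A : Fin ℓ → Finset (Fin n → ℤ))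
    (c : Fin ℓ → (Fin n → ℤ) → ℝ) (hc : ∀ i, ∀ α ∈ A i, 0 < c i α)
    (f : Fin ℓ → (Fin n → ℝ) → ℝ)
    (hf : ∀ i x, f i x = ∑ α ∈ A i, c i α * ∏ j, x j ^ (α j))
    (Δ : Fin ℓ → Set (Fin n → ℝ))
    (hΔ : ∀ i, Δ i = convexHull ℝ
      ((fun (α : Fin n → ℤ) (j : Fin n) => (α j : ℝ)) '' (A i : Set (Fin n → ℤ))))
    (hdim : affineSpan ℝ (∑ i, Δ i) = ⊤)
    (s : Fin ℓ → ℝ) (hs : ∀ i, 0 < s i) (ν : Fin n → ℝ) :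
    StrictConcaveOn ℝ Set.univ
      (fun z : Fin n → ℝ =>
        ∑ j, ν j * z j - ∑ i, s i * Real.log (f i (fun j => Real.exp (z j)))) := by
  classical
  have hfe : ∀ (z : Fin n → ℝ) i, f i (fun j => Real.exp (z j)) =
      ∑ α ∈ A i, c i α * Real.exp (∑ j, (α j : ℝ) * z j) := by
    intro z i
    rw [hf]
    refine Finset.sum_congr rfl fun α _ => ?_
    congr 1
    rw [Real.exp_sum]
    refine Finset.prod_congr rfl fun j _ => ?_
    rw [← Real.rpow_intCast (Real.exp (z j)) (α j), Real.rpow_def_of_pos (Real.exp_pos _),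
      Real.log_exp, mul_comm]
  refine ⟨convex_univ, fun x _ y _ hxy t u ht hu htu => ?_⟩
  simp only [smul_eq_mul]
  have hmidj : ∀ j, (t • x + u • y) j = t * x j + u * y j := fun j => by
    simp [Pi.add_apply, Pi.smul_apply, smul_eq_mul]
  have hmid : ∀ (α : Fin n → ℤ), (∑ j, (α j : ℝ) * (t • x + u • y) j) =
      t * (∑ j, (α j : ℝ) * x j) + u * (∑ j, (α j : ℝ) * y j) := by
    intro α
    rw [Finset.mul_sum, Finset.mul_sum, ← Finset.sum_add_distrib]
    refine Finset.sum_congr rfl fun j _ => ?_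
    rw [hmidj j]; ring
  have hlin : (∑ j, ν j * (t • x + u • y) j) =
      t * (∑ j, ν j * x j) + u * (∑ j, ν j * y j) := by
    rw [Finset.mul_sum, Finset.mul_sum, ← Finset.sum_add_distrib]
    refine Finset.sum_congr rfl fun j _ => ?_
    rw [hmidj j]; ring
  obtain ⟨i₀, α₀, hα₀, β₀, hβ₀, hwne⟩ :=
    aux_witness n ℓ A Δ hΔ hdim (x - y) (sub_ne_zero.2 hxy)
  have hsub : ∀ (α : Fin n → ℤ), (∑ j, (α j : ℝ) * (x - y) j) =
      (∑ j, (α j : ℝ) * x j) - (∑ j, (α j : ℝ) * y j) := by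
    intro α
    rw [← Finset.sum_sub_distrib]
    refine Finset.sum_congr rfl fun j _ => ?_
    simp [Pi.sub_apply, mul_sub]
  have hmain : ∑ i, s i * Real.log (f i (fun j => Real.exp ((t • x + u • y) j))) <
      ∑ i, s i * (t * Real.log (f i (fun j => Real.exp (x j))) +
        u * Real.log (f i (fun j => Real.exp (y j)))) := by
    refine Finset.sum_lt_sum (fun i _ => ?_) ⟨i₀, Finset.mem_univ i₀, ?_⟩
    · rw [hfe, hfe, hfe]
      refine mul_le_mul_of_nonneg_left ?_ (hs i).le
      calc Real.log (∑ α ∈ A i, c i α * Real.exp (∑ j, (α j : ℝ) * (t • x + u • y) j))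
          = Real.log (∑ α ∈ A i, c i α * Real.exp (t * (∑ j, (α j : ℝ) * x j) +
              u * (∑ j, (α j : ℝ) * y j))) := by
            congr 1; exact Finset.sum_congr rfl fun α _ => by rw [hmid α]
        _ ≤ _ := aux_logsum_le (A i) (c i) _ _ (hc i) ht hu htu
    · rw [hfe, hfe, hfe]
      refine mul_lt_mul_of_pos_left ?_ (hs i₀)
      calc Real.log (∑ α ∈ A i₀, c i₀ α * Real.exp (∑ j, (α j : ℝ) * (t • x + u • y) j))
          = Real.log (∑ α ∈ A i₀, c i₀ α * Real.exp (t * (∑ j, (α j : ℝ) * x j) +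
              u * (∑ j, (α j : ℝ) * y j))) := by
            congr 1; exact Finset.sum_congr rfl fun α _ => by rw [hmid α]
        _ < _ := by
            refine aux_logsum_lt (A i₀) (c i₀) _ _ (hc i₀) ht hu htu
              ⟨α₀, hα₀, β₀, hβ₀, ?_⟩
            rw [← hsub α₀, ← hsub β₀]
            exact hwne
  have hrhs : ∑ i, s i * (t * Real.log (f i (fun j => Real.exp (x j))) +
      u * Real.log (f i (fun j => Real.exp (y j)))) =
      t * (∑ i, s i * Real.log (f i (fun j => Real.exp (x j)))) +
      u * (∑ i, s i * Real.log (f i (fun j => Real.exp (y j)))) := by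
    rw [Finset.mul_sum, Finset.mul_sum, ← Finset.sum_add_distrib]
    exact Finset.sum_congr rfl fun i _ => by ring
  rw [hrhs] at hmain
  rw [hlin]
  linarith
end

section
/- Let f₁,…,f_ℓ be Laurent polynomials in n variables with positive real coefficients, let s ∈ ℝ_{>0}^ℓ, and suppose Δ(f₁) + ⋯ + Δ(f_ℓ) has dimension n. Define the moment map μ : ℝ^n_+ → ℝ^n by μ(x)_j = x_j · Σ_{i=1}^ℓ s_i (∂f_i/∂x_j)(x) / f_i(x). Then μ(ℝ^n_+) ⊆ int(P(s)), where P(s) = s₁·Δ(f₁) + ⋯ + s_ℓ·Δ(f_ℓ). -/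
open Pointwise

open Finset in
private lemma key_interior {E : Type*} [NormedAddCommGroup E] [NormedSpace ℝ E]
    [FiniteDimensional ℝ E] {ι : Type*} (T : Finset ι) (z : ι → E) (w : ι → ℝ)
    (hspan : affineSpan ℝ (z '' ↑T) = ⊤)
    (hw : ∀ i ∈ T, 0 < w i) (hw1 : ∑ i ∈ T, w i = 1) :
    (∑ i ∈ T, w i • z i) ∈ interior (convexHull ℝ (z '' ↑T)) := by
  classical
  obtain ⟨t, hts, b, hb⟩ := AffineBasis.exists_affine_subbasis (k := ℝ) (V := E) hspan
  haveI : Finite t := b.finite_set.to_subtype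
  set T1 : Finset ι := T.filter (fun i => z i ∈ t) with hT1
  set T2 : Finset ι := T.filter (fun i => ¬ z i ∈ t) with hT2
  have hT1ne : T1.Nonempty := by
    obtain ⟨k⟩ := b.nonempty
    have he : (k : E) ∈ z '' ↑T := hts k.2
    obtain ⟨i, hiT, hzi⟩ := he
    exact ⟨i, Finset.mem_filter.2 ⟨Finset.mem_coe.1 hiT, by rw [hzi]; exact k.2⟩⟩
  set W1 : ℝ := ∑ i ∈ T1, w i with hW1def
  have hW1 : 0 < W1 := Finset.sum_pos (fun i hi => hw i (Finset.mem_filter.1 hi).1) hT1ne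
  set w' : ι → ℝ := fun i => w i / W1 with hw'def
  have hw'1 : ∑ i ∈ T1, w' i = 1 := by
    rw [hw'def]; rw [← Finset.sum_div, ← hW1def, div_self hW1.ne']
  set q : E := ∑ i ∈ T1, w' i • z i with hqdef
  have hq_comb : T1.affineCombination ℝ z w' = q := by
    rw [affineCombination_eq_centerMass hw'1, Finset.centerMass_eq_of_sum_1 _ _ hw'1]
  have hcoord : ∀ k : t, 0 < b.coord k q := by
    intro k
    have h1 : b.coord k q = ∑ i ∈ T1, w' i • (b.coord k (z i)) := by
      rw [← hq_comb, Finset.map_affineCombination _ _ _ hw'1,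
        affineCombination_eq_centerMass hw'1, Finset.centerMass_eq_of_sum_1 _ _ hw'1]
      rfl
    rw [h1]
    obtain ⟨i0, hi0T, hzi0⟩ := hts k.2
    have hi0 : i0 ∈ T1 := Finset.mem_filter.2 ⟨Finset.mem_coe.1 hi0T, by rw [hzi0]; exact k.2⟩
    apply Finset.sum_pos'
    · intro i hi
      have hzit : z i ∈ t := (Finset.mem_filter.1 hi).2
      have : b ⟨z i, hzit⟩ = z i := by rw [hb]
      rw [← this, b.coord_apply]
      have hw'pos : 0 < w' i := div_pos (hw i (Finset.mem_filter.1 hi).1) hW1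
      split_ifs <;> simp [hw'pos.le]
    · refine ⟨i0, hi0, ?_⟩
      have hk : b k = z i0 := by rw [hb]; exact hzi0.symm
      rw [← hk, b.coord_apply, if_pos rfl]
      simpa using div_pos (hw i0 (Finset.mem_filter.1 hi0).1) hW1
  have hq : q ∈ interior (convexHull ℝ (z '' ↑T)) := by
    have h1 : q ∈ interior (convexHull ℝ (Set.range b)) := by
      rw [b.interior_convexHull]; exact hcoord
    have h2 : Set.range b ⊆ z '' ↑T := by
      rw [hb, Subtype.range_coe]; exact hts
    exact interior_mono (convexHull_mono h2) h1
  have hsplit : ∑ i ∈ T, w i • z i = (∑ i ∈ T1, w i • z i) + ∑ i ∈ T2, w i • z i :=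
    (Finset.sum_filter_add_sum_filter_not T _ _).symm
  have hq' : ∑ i ∈ T1, w i • z i = W1 • q := by
    rw [hqdef, Finset.smul_sum]
    refine Finset.sum_congr rfl fun i _ => ?_
    rw [smul_smul, hw'def, mul_div_cancel₀ _ hW1.ne']
  have hWsplit : W1 + ∑ i ∈ T2, w i = 1 := by
    rw [hW1def, hT1, hT2, Finset.sum_filter_add_sum_filter_not, hw1]
  rcases Finset.eq_empty_or_nonempty T2 with hT2e | hT2ne
  · have : W1 = 1 := by simpa [hT2e] using hWsplit
    rw [hsplit, hT2e, Finset.sum_empty, add_zero, hq', this, one_smul]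
    exact hq
  · set W2 : ℝ := ∑ i ∈ T2, w i with hW2def
    have hW2 : 0 < W2 := Finset.sum_pos (fun i hi => hw i (Finset.mem_filter.1 hi).1) hT2ne
    set r : E := T2.centerMass w z with hrdef
    have hr : r ∈ convexHull ℝ (z '' ↑T) := by
      apply Finset.centerMass_mem_convexHull
      · exact fun i hi => (hw i (Finset.mem_filter.1 hi).1).le
      · rwa [← hW2def]
      · exact fun i hi => ⟨i, Finset.mem_coe.2 (Finset.mem_filter.1 hi).1, rfl⟩
    have hr' : ∑ i ∈ T2, w i • z i = W2 • r := by
      rw [hrdef, Finset.centerMass, ← hW2def, smul_inv_smul₀ hW2.ne']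
    rw [hsplit, hq', hr']
    exact (convex_convexHull ℝ _).combo_interior_self_mem_interior hq hr hW1 hW2.le hWsplit

/-- the moment map lands in the interior of `P(s)`. For Laurent
polynomials with positive coefficients and `s ∈ ℝ^ℓ_{>0}`, with
`μ(x)_j = x_j Σᵢ sᵢ (∂fᵢ/∂x_j)(x)/fᵢ(x)`, one has `μ(ℝⁿ₊) ⊆ int(P(s))`. -/
theorem stmt_10 (n ℓ : ℕ) (A : Fin ℓ → Finset (Fin n → ℤ))
    (c : Fin ℓ → (Fin n → ℤ) → ℝ) (hc : ∀ i, ∀ α ∈ A i, 0 < c i α)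
    (s : Fin ℓ → ℝ) (hs : ∀ i, 0 < s i)
    (f : Fin ℓ → (Fin n → ℝ) → ℝ)
    (hf : ∀ i x, f i x = ∑ α ∈ A i, c i α * ∏ j, x j ^ (α j))
    -- first partial derivatives `∂fᵢ/∂x_j` (valid on `ℝⁿ₊`)
    (pd : Fin ℓ → Fin n → (Fin n → ℝ) → ℝ)
    (hpd : ∀ i j x, pd i j x = ∑ α ∈ A i, c i α * (α j : ℝ) * (∏ m, x m ^ (α m)) / x j)
    (Δ : Fin ℓ → Set (Fin n → ℝ))
    (hΔ : ∀ i, Δ i = convexHull ℝ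
      ((fun (α : Fin n → ℤ) (j : Fin n) => (α j : ℝ)) '' (A i : Set (Fin n → ℤ))))
    (hdim : affineSpan ℝ (∑ i, Δ i) = ⊤)
    -- the moment map
    (μ : (Fin n → ℝ) → (Fin n → ℝ))
    (hμ : ∀ x j, μ x j = x j * ∑ i, s i * (pd i j x / f i x)) :
    μ '' {x : Fin n → ℝ | ∀ j, 0 < x j} ⊆ interior (∑ i, s i • Δ i) := by
  classical
  rintro y ⟨x, hx, rfl⟩
  simp only [Set.mem_setOf_eq] at hx
  set cast : (Fin n → ℤ) → (Fin n → ℝ) := fun α j => (α j : ℝ) with hcast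
  have hP : ∀ α : Fin n → ℤ, 0 < ∏ j, x j ^ (α j) :=
    fun α => Finset.prod_pos fun j _ => zpow_pos (hx j) _
  -- every A i is nonempty
  have hAne : ∀ i, (A i).Nonempty := by
    intro i
    by_contra hempty
    rw [Finset.not_nonempty_iff_eq_empty] at hempty
    have hΔi : Δ i = ∅ := by rw [hΔ i, hempty]; simp
    have hsum : (∑ i, Δ i) = (∅ : Set (Fin n → ℝ)) := by
      apply Set.eq_empty_iff_forall_notMem.2
      intro y hy
      rw [Set.mem_finset_sum] at hy
      obtain ⟨g, hg, -⟩ := hy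
      have := hg (Finset.mem_univ i)
      rw [hΔi] at this; exact this
    rw [hsum, AffineSubspace.span_empty] at hdim
    exact AffineSubspace.bot_ne_top ℝ (Fin n → ℝ) (Fin n → ℝ) hdim
  have hfpos : ∀ i, 0 < f i x := by
    intro i; rw [hf]
    exact Finset.sum_pos (fun α hα => mul_pos (hc i α hα) (hP α)) (hAne i)
  -- one-variable weights
  set v : Fin ℓ → (Fin n → ℤ) → ℝ := fun i α => c i α * (∏ j, x j ^ (α j)) / f i x with hv
  have hvpos : ∀ i, ∀ α ∈ A i, 0 < v i α :=
    fun i α hα => div_pos (mul_pos (hc i α hα) (hP α)) (hfpos i)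
  have hvsum : ∀ i, ∑ α ∈ A i, v i α = 1 := by
    intro i
    rw [hv]
    simp only
    rw [← Finset.sum_div, ← hf i x, div_self (hfpos i).ne']
  set ν : Fin ℓ → (Fin n → ℝ) := fun i => ∑ α ∈ A i, v i α • cast α with hν
  set G : Finset (Fin ℓ → (Fin n → ℤ)) := Fintype.piFinset A with hG
  set W : (Fin ℓ → (Fin n → ℤ)) → ℝ := fun g => ∏ i, v i (g i) with hW
  set zfun : (Fin ℓ → (Fin n → ℤ)) → (Fin n → ℝ) := fun g => ∑ i, s i • cast (g i) with hzfun
  have hGne : G.Nonempty := Fintype.piFinset_nonempty.2 hAne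
  have hWsum : ∑ g ∈ G, W g = 1 := by
    rw [hW, hG, ← Finset.prod_univ_sum]
    simp [hvsum]
  have hWpos : ∀ g ∈ G, 0 < W g :=
    fun g hg => Finset.prod_pos fun i _ => hvpos i (g i) (Fintype.mem_piFinset.1 hg i)
  -- fiber sums
  have hfiber : ∀ (i : Fin ℓ), ∀ α ∈ A i,
      ∑ g ∈ G.filter (fun g => g i = α), W g = v i α := by
    intro i α hα
    have hGf : G.filter (fun g => g i = α) = Fintype.piFinset (Function.update A i {α}) := by
      ext g
      simp only [Finset.mem_filter, Fintype.mem_piFinset, hG]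
      constructor
      · rintro ⟨hg, hgi⟩ j
        rw [Function.update_apply]
        split_ifs with h
        · subst h; simpa using hgi
        · exact hg j
      · intro h
        have hgi : g i = α := by
          have := h i; rwa [Function.update_self, Finset.mem_singleton] at this
        refine ⟨fun j => ?_, hgi⟩
        rcases eq_or_ne j i with rfl | hj
        · rw [hgi]; exact hα
        · have := h j; rwa [Function.update_of_ne hj] at this
    rw [hGf, ← Finset.prod_univ_sum]
    have hterm : ∀ j, (∑ β ∈ Function.update A i {α} j, v j β) = if j = i then v i α else 1 := by
      intro j
      rcases eq_or_ne j i with rfl | hj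
      · simp
      · rw [Function.update_of_ne hj, hvsum j, if_neg hj]
    rw [Finset.prod_congr rfl (fun j _ => hterm j), Finset.prod_ite_eq' Finset.univ i
      (fun _ => v i α), if_pos (Finset.mem_univ i)]
  -- the big combination identity
  have hkey : ∑ g ∈ G, W g • zfun g = ∑ i, s i • ν i := by
    have h1 : ∑ g ∈ G, W g • zfun g = ∑ i, ∑ g ∈ G, W g • (s i • cast (g i)) := by
      simp only [hzfun, Finset.smul_sum]
      exact Finset.sum_comm
    rw [h1]
    refine Finset.sum_congr rfl fun i _ => ?_
    rw [← Finset.sum_fiberwise_of_maps_to (g := fun g => g i) (t := A i)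
      (fun g hg => Fintype.mem_piFinset.1 hg i) (fun g => W g • (s i • cast (g i)))]
    have h2 : ∀ α ∈ A i, ∑ g ∈ G.filter (fun g => g i = α), W g • (s i • cast (g i))
        = v i α • (s i • cast α) := by
      intro α hα
      rw [← hfiber i α hα, Finset.sum_smul]
      refine Finset.sum_congr rfl fun g hg => ?_
      rw [(Finset.mem_filter.1 hg).2]
    rw [Finset.sum_congr rfl h2, hν]
    simp only
    rw [Finset.smul_sum]
    exact Finset.sum_congr rfl fun α _ => smul_comm _ _ _
  -- μ x equals the combination
  have hμν : μ x = ∑ i, s i • ν i := by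
    funext j
    rw [hμ]
    have hsa : (∑ i, s i • ν i) j = ∑ i, s i * ν i j := by
      rw [Finset.sum_apply]; rfl
    rw [hsa, Finset.mul_sum]
    refine Finset.sum_congr rfl fun i _ => ?_
    rw [hpd]
    have hnum : (∑ α ∈ A i, c i α * (α j : ℝ) * (∏ m, x m ^ (α m)) / x j)
        = (∑ α ∈ A i, c i α * (α j : ℝ) * ∏ m, x m ^ (α m)) / x j := by
      rw [Finset.sum_div]
    have hνj : ν i j = (∑ α ∈ A i, c i α * (α j : ℝ) * ∏ m, x m ^ (α m)) / f i x := by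
      rw [hν]
      simp only
      rw [Finset.sum_apply, Finset.sum_div]
      refine Finset.sum_congr rfl fun α _ => ?_
      simp only [Pi.smul_apply, hv, hcast, smul_eq_mul]
      ring
    rw [hnum, hνj]
    have h1 : x j ≠ 0 := (hx j).ne'
    have h2 : f i x ≠ 0 := (hfpos i).ne'
    field_simp
  -- the Minkowski sum of scaled vertex sets
  have hSsum : (∑ i, s i • (cast '' (A i : Set (Fin n → ℤ)))) = zfun '' ↑G := by
    apply Set.Subset.antisymm
    · intro y hy
      rw [Set.mem_finset_sum] at hy
      obtain ⟨h, hmem, hsum⟩ := hy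
      have hex : ∀ i, ∃ α, α ∈ A i ∧ s i • cast α = h i := by
        intro i
        obtain ⟨b, hb, hb2⟩ := hmem (Finset.mem_univ i)
        obtain ⟨α, hα, rfl⟩ := hb
        exact ⟨α, hα, hb2⟩
      choose g hg1 hg2 using hex
      refine ⟨g, Finset.mem_coe.2 (Fintype.mem_piFinset.2 hg1), ?_⟩
      rw [← hsum, hzfun]
      simp only
      exact Finset.sum_congr rfl fun i _ => hg2 i
    · rintro y ⟨g, hg, rfl⟩
      have : zfun g = ∑ i, s i • cast (g i) := by rw [hzfun]
      rw [this]
      apply Set.finset_sum_mem_finset_sum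
      intro i _
      exact ⟨cast (g i), ⟨g i, Fintype.mem_piFinset.1 (Finset.mem_coe.1 hg) i, rfl⟩, rfl⟩
  have hhull : convexHull ℝ (zfun '' ↑G) = ∑ i, s i • Δ i := by
    rw [← hSsum, convexHull_sum]
    refine Finset.sum_congr rfl fun i _ => ?_
    rw [convexHull_smul, hΔ i]
  -- full affine span
  have hvc : ∀ (M : Set (Fin n → ℝ)), vectorSpan ℝ (convexHull ℝ M) = vectorSpan ℝ M := by
    intro M
    rw [← direction_affineSpan, affineSpan_convexHull, direction_affineSpan]
  have hdiff : ∀ i, ∀ α ∈ A i, ∀ β ∈ A i, cast α - cast β ∈ vectorSpan ℝ (zfun '' ↑G) := by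
    intro i α hα β hβ
    obtain ⟨g0, hg0⟩ := hGne
    set g1 := Function.update g0 i α with hg1def
    set g2 := Function.update g0 i β with hg2def
    have hg1 : g1 ∈ G := by
      rw [hG] at hg0 ⊢
      refine Fintype.mem_piFinset.2 fun j => ?_
      rw [hg1def, Function.update_apply]
      split_ifs with h
      · subst h; exact hα
      · exact Fintype.mem_piFinset.1 hg0 j
    have hg2 : g2 ∈ G := by
      rw [hG] at hg0 ⊢
      refine Fintype.mem_piFinset.2 fun j => ?_
      rw [hg2def, Function.update_apply]
      split_ifs with h
      · subst h; exact hβ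
      · exact Fintype.mem_piFinset.1 hg0 j
    have hz : zfun g1 - zfun g2 = s i • (cast α - cast β) := by
      rw [hzfun]
      simp only
      rw [← Finset.sum_sub_distrib, Finset.sum_eq_single i]
      · rw [hg1def, hg2def, Function.update_self, Function.update_self, ← smul_sub]
      · intro k _ hk
        rw [hg1def, hg2def, Function.update_of_ne hk, Function.update_of_ne hk, sub_self]
      · intro h; exact absurd (Finset.mem_univ i) h
    have hmem : zfun g1 - zfun g2 ∈ vectorSpan ℝ (zfun '' ↑G) := by
      have h1 : zfun g1 ∈ zfun '' ↑G := ⟨g1, Finset.mem_coe.2 hg1, rfl⟩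
      have h2 : zfun g2 ∈ zfun '' ↑G := ⟨g2, Finset.mem_coe.2 hg2, rfl⟩
      have := vsub_mem_vectorSpan ℝ h1 h2
      rwa [vsub_eq_sub] at this
    rw [hz] at hmem
    have := Submodule.smul_mem (vectorSpan ℝ (zfun '' ↑G)) (s i)⁻¹ hmem
    rwa [inv_smul_smul₀ (hs i).ne'] at this
  have hspanS : affineSpan ℝ (zfun '' ↑G) = ⊤ := by
    have hSne : (zfun '' ↑G).Nonempty := (Finset.coe_nonempty.2 hGne).image _
    rw [AffineSubspace.affineSpan_eq_top_iff_vectorSpan_eq_top_of_nonempty ℝ (Fin n → ℝ) (Fin n → ℝ) hSne]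
    rw [eq_top_iff, ← AffineSubspace.vectorSpan_eq_top_of_affineSpan_eq_top ℝ (Fin n → ℝ) (Fin n → ℝ) hdim]
    rw [vectorSpan_def]
    apply Submodule.span_le.2
    rintro w ⟨u, hu, u', hu', rfl⟩
    rw [Set.mem_finset_sum] at hu hu'
    obtain ⟨p, hp, hpsum⟩ := hu
    obtain ⟨p', hp', hpsum'⟩ := hu'
    show u -ᵥ u' ∈ _
    rw [vsub_eq_sub, ← hpsum, ← hpsum', ← Finset.sum_sub_distrib]
    apply Submodule.sum_mem
    intro i _
    have h1 : p i - p' i ∈ vectorSpan ℝ (Δ i) := by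
      have := vsub_mem_vectorSpan ℝ (hp (Finset.mem_univ i)) (hp' (Finset.mem_univ i))
      rwa [vsub_eq_sub] at this
    have h2 : vectorSpan ℝ (Δ i) ≤ vectorSpan ℝ (zfun '' ↑G) := by
      rw [hΔ i, hvc, vectorSpan_def]
      apply Submodule.span_le.2
      rintro w' ⟨a, ⟨α, hα, rfl⟩, b, ⟨β, hβ, rfl⟩, rfl⟩
      show cast α -ᵥ cast β ∈ _
      rw [vsub_eq_sub]
      exact hdiff i α (Finset.mem_coe.1 hα) β (Finset.mem_coe.1 hβ)
    exact h2 h1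
  rw [← hhull, hμν, ← hkey]
  exact key_interior G zfun W hspanS hWpos hWsum
end

section
/- Let f₁,…,f_ℓ be Laurent polynomials in n variables with positive real coefficients, let s ∈ ℝ_{>0}^ℓ, and suppose Δ(f₁) + ⋯ + Δ(f_ℓ) has dimension n. Then the moment map μ : ℝ^n_+ → int(P(s)), μ(x)_j = x_j · Σ_{i=1}^ℓ s_i (∂f_i/∂x_j)(x) / f_i(x), is a bijection from ℝ^n_+ = (0,∞)^n onto the interior of P(s) = s₁·Δ(f₁) + ⋯ + s_ℓ·Δ(f_ℓ). -/
open Pointwise Real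

namespace Stmt11Aux

noncomputable section

variable {n : ℕ}

/-- dot product on `Fin n → ℝ`. -/
def dotR (v w : Fin n → ℝ) : ℝ := ∑ j, v j * w j

def aR (α : Fin n → ℤ) : Fin n → ℝ := fun j => (α j : ℝ)

lemma dotR_add_right (a y z : Fin n → ℝ) : dotR a (y + z) = dotR a y + dotR a z := by
  simp [dotR, mul_add, Finset.sum_add_distrib]

lemma dotR_smul_right (a y : Fin n → ℝ) (t : ℝ) : dotR a (t • y) = t * dotR a y := by
  simp only [dotR, Finset.mul_sum, Pi.smul_apply, smul_eq_mul]
  exact Finset.sum_congr rfl fun j _ => by ring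

lemma dotR_comm (a b : Fin n → ℝ) : dotR a b = dotR b a := by
  simp [dotR, mul_comm]

lemma dotR_self_pos {v : Fin n → ℝ} (hv : v ≠ 0) : 0 < dotR v v := by
  have h : ∀ j, 0 ≤ v j * v j := fun j => mul_self_nonneg _
  rcases Function.ne_iff.1 hv with ⟨j, hj⟩
  exact Finset.sum_pos' (fun j _ => h j) ⟨j, Finset.mem_univ j, by
    simpa [mul_self_pos] using hj⟩

/-- every continuous linear functional on `Fin n → ℝ` is a dot product. -/
lemma clm_eq_dotR (g : (Fin n → ℝ) →L[ℝ] ℝ) (z : Fin n → ℝ) :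
    g z = dotR z (fun j => g (Pi.single j 1)) := by
  have hz : z = ∑ j, (z j) • (Pi.single j 1 : Fin n → ℝ) := by
    have := Finset.univ_sum_single z
    rw [← this]
    congr 1; funext j
    funext k
    simp [Pi.single_apply, mul_ite]
  calc g z = g (∑ j, (z j) • (Pi.single j 1 : Fin n → ℝ)) := by rw [← hz]
    _ = ∑ j, (z j) * g (Pi.single j 1) := by
        rw [map_sum]; simp
    _ = _ := rfl




variable {ι : Type*}



lemma dotR_sum_left (T : Finset ι) (f : ι → (Fin n → ℝ)) (v : Fin n → ℝ) :
    dotR (∑ α ∈ T, f α) v = ∑ α ∈ T, dotR (f α) v := by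
  simp only [dotR, Finset.sum_apply, Finset.sum_mul]
  exact Finset.sum_comm

lemma dotR_smul_left (r : ℝ) (z v : Fin n → ℝ) : dotR (r • z) v = r * dotR z v := by
  simp only [dotR, Pi.smul_apply, smul_eq_mul, Finset.mul_sum]
  exact Finset.sum_congr rfl fun j _ => by ring

lemma isLinearMap_dotR (v : Fin n → ℝ) : IsLinearMap ℝ (fun z : Fin n → ℝ => dotR z v) := by
  constructor
  · intro a b
    simp only [dotR, Pi.add_apply, add_mul, Finset.sum_add_distrib]
  · intro r a
    simpa [smul_eq_mul] using dotR_smul_left r a v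

section cheb

/-- The Chebyshev-type correlation inequality for exponentials. -/
lemma cheb_le (T : Finset ι) (w b : ι → ℝ) (hw : ∀ α ∈ T, 0 < w α) :
    (∑ α ∈ T, w α * b α) * (∑ α ∈ T, w α * Real.exp (b α)) ≤
      (∑ α ∈ T, w α * b α * Real.exp (b α)) * (∑ α ∈ T, w α) := by
  have h1 : 0 ≤ ∑ α ∈ T, ∑ β ∈ T,
      w α * w β * ((b α - b β) * (Real.exp (b α) - Real.exp (b β))) := by
    refine Finset.sum_nonneg fun α hα => Finset.sum_nonneg fun β hβ => ?_
    refine mul_nonneg (mul_nonneg (hw α hα).le (hw β hβ).le) ?_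
    rcases le_total (b α) (b β) with h | h
    · have h' := Real.exp_le_exp.2 h
      nlinarith
    · have h' := Real.exp_le_exp.2 h
      nlinarith
  have h2 : ∑ α ∈ T, ∑ β ∈ T,
      w α * w β * ((b α - b β) * (Real.exp (b α) - Real.exp (b β)))
      = (∑ α ∈ T, w α * b α * Real.exp (b α)) * (∑ α ∈ T, w α)
        - (∑ α ∈ T, w α * b α) * (∑ α ∈ T, w α * Real.exp (b α))
        - (∑ α ∈ T, w α * Real.exp (b α)) * (∑ α ∈ T, w α * b α)
        + (∑ α ∈ T, w α) * (∑ α ∈ T, w α * b α * Real.exp (b α)) := by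
    rw [Finset.sum_mul_sum, Finset.sum_mul_sum, Finset.sum_mul_sum, Finset.sum_mul_sum]
    rw [← Finset.sum_sub_distrib, ← Finset.sum_sub_distrib, ← Finset.sum_add_distrib]
    refine Finset.sum_congr rfl fun α _ => ?_
    rw [← Finset.sum_sub_distrib, ← Finset.sum_sub_distrib, ← Finset.sum_add_distrib]
    refine Finset.sum_congr rfl fun β _ => by ring
  nlinarith [h1, h2]

lemma cheb_lt (T : Finset ι) (w b : ι → ℝ) (hw : ∀ α ∈ T, 0 < w α)
    {α₀ β₀ : ι} (hα₀ : α₀ ∈ T) (hβ₀ : β₀ ∈ T) (hne : b α₀ ≠ b β₀) :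
    (∑ α ∈ T, w α * b α) * (∑ α ∈ T, w α * Real.exp (b α)) <
      (∑ α ∈ T, w α * b α * Real.exp (b α)) * (∑ α ∈ T, w α) := by
  have key : ∀ α ∈ T, ∀ β ∈ T, 0 ≤
      w α * w β * ((b α - b β) * (Real.exp (b α) - Real.exp (b β))) := by
    intro α hα β hβ
    refine mul_nonneg (mul_nonneg (hw α hα).le (hw β hβ).le) ?_
    rcases le_total (b α) (b β) with h | h
    · have h' := Real.exp_le_exp.2 h
      nlinarith
    · have h' := Real.exp_le_exp.2 h
      nlinarith
  have h1 : 0 < ∑ α ∈ T, ∑ β ∈ T,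
      w α * w β * ((b α - b β) * (Real.exp (b α) - Real.exp (b β))) := by
    refine Finset.sum_pos' (fun α hα => Finset.sum_nonneg fun β hβ => key α hα β hβ)
      ⟨α₀, hα₀, Finset.sum_pos' (fun β hβ => key α₀ hα₀ β hβ) ⟨β₀, hβ₀, ?_⟩⟩
    refine mul_pos (mul_pos (hw α₀ hα₀) (hw β₀ hβ₀)) ?_
    rcases lt_or_gt_of_ne hne with h | h
    · have h' := Real.exp_lt_exp.2 h
      nlinarith
    · have h' := Real.exp_lt_exp.2 h
      nlinarith
  have h2 : ∑ α ∈ T, ∑ β ∈ T,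
      w α * w β * ((b α - b β) * (Real.exp (b α) - Real.exp (b β)))
      = (∑ α ∈ T, w α * b α * Real.exp (b α)) * (∑ α ∈ T, w α)
        - (∑ α ∈ T, w α * b α) * (∑ α ∈ T, w α * Real.exp (b α))
        - (∑ α ∈ T, w α * Real.exp (b α)) * (∑ α ∈ T, w α * b α)
        + (∑ α ∈ T, w α) * (∑ α ∈ T, w α * b α * Real.exp (b α)) := by
    rw [Finset.sum_mul_sum, Finset.sum_mul_sum, Finset.sum_mul_sum, Finset.sum_mul_sum]
    rw [← Finset.sum_sub_distrib, ← Finset.sum_sub_distrib, ← Finset.sum_add_distrib]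
    refine Finset.sum_congr rfl fun α _ => ?_
    rw [← Finset.sum_sub_distrib, ← Finset.sum_sub_distrib, ← Finset.sum_add_distrib]
    refine Finset.sum_congr rfl fun β _ => by ring
  nlinarith [h1, h2]

end cheb

section Single

variable (S : Finset (Fin n → ℤ)) (d : (Fin n → ℤ) → ℝ)

/-- `f` evaluated at `exp y`, i.e. `∑ d α e^{⟨α,y⟩}`. -/
def Efun (y : Fin n → ℝ) : ℝ := ∑ α ∈ S, d α * Real.exp (dotR (aR α) y)

/-- the weighted average of the exponents. -/
def nu (y : Fin n → ℝ) : Fin n → ℝ :=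
  (Efun S d y)⁻¹ • ∑ α ∈ S, (d α * Real.exp (dotR (aR α) y)) • aR α

variable {S d}

lemma Efun_pos (hS : S.Nonempty) (hd : ∀ α ∈ S, 0 < d α) (y : Fin n → ℝ) :
    0 < Efun S d y :=
  Finset.sum_pos (fun α hα => mul_pos (hd α hα) (Real.exp_pos _)) hS

lemma nu_eq_centerMass (y : Fin n → ℝ) :
    nu S d y = S.centerMass (fun α => d α * Real.exp (dotR (aR α) y)) aR := rfl

lemma nu_mem_convexHull (hS : S.Nonempty) (hd : ∀ α ∈ S, 0 < d α) (y : Fin n → ℝ) :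
    nu S d y ∈ convexHull ℝ (aR '' (S : Set (Fin n → ℤ))) := by
  rw [nu_eq_centerMass]
  refine Finset.centerMass_mem_convexHull S
    (fun α hα => (mul_pos (hd α hα) (Real.exp_pos _)).le)
    (Efun_pos hS hd y) (fun α hα => Set.mem_image_of_mem _ hα)

lemma dotR_nu (y v : Fin n → ℝ) :
    dotR (nu S d y) v
      = (∑ α ∈ S, (d α * Real.exp (dotR (aR α) y)) * dotR (aR α) v) / Efun S d y := by
  rw [nu, dotR_smul_left, dotR_sum_left]
  rw [inv_mul_eq_div]
  congr 1
  exact Finset.sum_congr rfl fun α _ => dotR_smul_left _ _ _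

lemma Efun_add (y v : Fin n → ℝ) :
    Efun S d (y + v) = ∑ α ∈ S, (d α * Real.exp (dotR (aR α) y)) * Real.exp (dotR (aR α) v) := by
  unfold Efun
  refine Finset.sum_congr rfl fun α _ => ?_
  rw [dotR_add_right, Real.exp_add]; ring

/-- monotonicity of the average along the direction `v`. -/
lemma dotR_nu_le (hS : S.Nonempty) (hd : ∀ α ∈ S, 0 < d α) (y v : Fin n → ℝ) :
    dotR (nu S d y) v ≤ dotR (nu S d (y + v)) v := by
  have hE := Efun_pos hS hd y
  have hE' := Efun_pos hS hd (y + v)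
  rw [dotR_nu, dotR_nu, div_le_div_iff₀ hE hE', Efun_add]
  have h := cheb_le S (fun α => d α * Real.exp (dotR (aR α) y)) (fun α => dotR (aR α) v)
    (fun α hα => mul_pos (hd α hα) (Real.exp_pos _))
  calc (∑ α ∈ S, d α * Real.exp (dotR (aR α) y) * dotR (aR α) v) *
        (∑ α ∈ S, d α * Real.exp (dotR (aR α) y) * Real.exp (dotR (aR α) v))
      ≤ (∑ α ∈ S, d α * Real.exp (dotR (aR α) y) * dotR (aR α) v * Real.exp (dotR (aR α) v)) *
        (∑ α ∈ S, d α * Real.exp (dotR (aR α) y)) := h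
    _ = (∑ α ∈ S, d α * Real.exp (dotR (aR α) (y + v)) * dotR (aR α) v) * Efun S d y := by
        unfold Efun
        congr 1
        refine Finset.sum_congr rfl fun α _ => ?_
        rw [dotR_add_right, Real.exp_add]; ring

lemma dotR_nu_lt (hS : S.Nonempty) (hd : ∀ α ∈ S, 0 < d α) (y v : Fin n → ℝ)
    {α₀ β₀ : Fin n → ℤ} (hα₀ : α₀ ∈ S) (hβ₀ : β₀ ∈ S)
    (hne : dotR (aR α₀) v ≠ dotR (aR β₀) v) :
    dotR (nu S d y) v < dotR (nu S d (y + v)) v := by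
  have hE := Efun_pos hS hd y
  have hE' := Efun_pos hS hd (y + v)
  rw [dotR_nu, dotR_nu, div_lt_div_iff₀ hE hE', Efun_add]
  have h := cheb_lt S (fun α => d α * Real.exp (dotR (aR α) y)) (fun α => dotR (aR α) v)
    (fun α hα => mul_pos (hd α hα) (Real.exp_pos _)) hα₀ hβ₀ hne
  calc (∑ α ∈ S, d α * Real.exp (dotR (aR α) y) * dotR (aR α) v) *
        (∑ α ∈ S, d α * Real.exp (dotR (aR α) y) * Real.exp (dotR (aR α) v))
      < (∑ α ∈ S, d α * Real.exp (dotR (aR α) y) * dotR (aR α) v * Real.exp (dotR (aR α) v)) *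
        (∑ α ∈ S, d α * Real.exp (dotR (aR α) y)) := h
    _ = (∑ α ∈ S, d α * Real.exp (dotR (aR α) (y + v)) * dotR (aR α) v) * Efun S d y := by
        unfold Efun
        congr 1
        refine Finset.sum_congr rfl fun α _ => ?_
        rw [dotR_add_right, Real.exp_add]; ring

/-- maximum principle on the convex hull. -/
lemma dotR_le_sup' (hS : S.Nonempty) {z : Fin n → ℝ}
    (hz : z ∈ convexHull ℝ (aR '' (S : Set (Fin n → ℤ)))) (v : Fin n → ℝ) :
    dotR z v ≤ S.sup' hS (fun α => dotR (aR α) v) := by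
  have hconv : Convex ℝ {w : Fin n → ℝ | dotR w v ≤ S.sup' hS (fun α => dotR (aR α) v)} :=
    convex_halfSpace_le (isLinearMap_dotR v) _
  have hsub : aR '' (S : Set (Fin n → ℤ)) ⊆
      {w : Fin n → ℝ | dotR w v ≤ S.sup' hS (fun α => dotR (aR α) v)} := by
    rintro _ ⟨α, hα, rfl⟩
    exact Finset.le_sup' (fun α => dotR (aR α) v) hα
  exact convexHull_min hsub hconv hz

/-- if the average dominates every point of `S`, all points of `S` give the same value. -/
lemma avg_eq_of_le (hS : S.Nonempty) (hd : ∀ α ∈ S, 0 < d α) (y v : Fin n → ℝ)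
    (hge : ∀ α ∈ S, dotR (aR α) v ≤ dotR (nu S d y) v) :
    ∀ α ∈ S, dotR (aR α) v = dotR (nu S d y) v := by
  have hE := Efun_pos hS hd y
  set m := dotR (nu S d y) v with hm
  have hsum : ∑ α ∈ S, (d α * Real.exp (dotR (aR α) y)) * (m - dotR (aR α) v) = 0 := by
    have : ∑ α ∈ S, (d α * Real.exp (dotR (aR α) y)) * (m - dotR (aR α) v)
        = m * Efun S d y - ∑ α ∈ S, (d α * Real.exp (dotR (aR α) y)) * dotR (aR α) v := by
      unfold Efun
      rw [Finset.mul_sum, ← Finset.sum_sub_distrib]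
      exact Finset.sum_congr rfl fun α _ => by ring
    rw [this, hm, dotR_nu, div_mul_cancel₀]
    · ring
    · exact hE.ne'
  have hnn : ∀ α ∈ S, 0 ≤ (d α * Real.exp (dotR (aR α) y)) * (m - dotR (aR α) v) := by
    intro α hα
    exact mul_nonneg (mul_pos (hd α hα) (Real.exp_pos _)).le (by linarith [hge α hα])
  intro α hα
  have := (Finset.sum_eq_zero_iff_of_nonneg hnn).1 hsum α hα
  rcases mul_eq_zero.1 this with h | h
  · exact absurd h (mul_pos (hd α hα) (Real.exp_pos _)).ne'
  · linarith

end Single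

lemma dotR_zero_right (z : Fin n → ℝ) : dotR z 0 = 0 := by simp [dotR]

lemma dotR_single_right (z : Fin n → ℝ) (j : Fin n) : dotR z (Pi.single j 1) = z j := by
  simp [dotR, Pi.single_apply]

lemma dotR_single_left (v : Fin n → ℝ) (j : Fin n) : dotR (Pi.single j 1) v = v j := by
  simp [dotR, Pi.single_apply]

lemma lin_eq_dotR (g : (Fin n → ℝ) →ₗ[ℝ] ℝ) (z : Fin n → ℝ) :
    g z = dotR z (fun j => g (Pi.single j 1)) := by
  have hz : z = ∑ j, (z j) • (Pi.single j 1 : Fin n → ℝ) := by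
    have := Finset.univ_sum_single z
    rw [← this]
    congr 1; funext j
    funext k
    simp [Pi.single_apply, mul_ite]
  calc g z = g (∑ j, (z j) • (Pi.single j 1 : Fin n → ℝ)) := by rw [← hz]
    _ = ∑ j, (z j) * g (Pi.single j 1) := by rw [map_sum]; simp
    _ = _ := rfl

section Multi

variable {ℓ : ℕ} (A : Fin ℓ → Finset (Fin n → ℤ)) (c : Fin ℓ → (Fin n → ℤ) → ℝ)
  (s : Fin ℓ → ℝ)

/-- the full moment map (in logarithmic coordinates). -/
def Nmap (y : Fin n → ℝ) : Fin n → ℝ := ∑ i, s i • nu (A i) (c i) y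

/-- the polytope `P(s)`. -/
def Pset : Set (Fin n → ℝ) :=
  ∑ i, s i • (convexHull ℝ (aR '' ((A i : Set (Fin n → ℤ)))))

variable {A c s}

lemma convex_Pset : Convex ℝ (Pset A s) := by
  unfold Pset
  refine Finset.sum_induction _ (fun t => Convex ℝ t) (fun a b ha hb => ha.add hb)
    (by exact convex_singleton (𝕜 := ℝ) (0 : Fin n → ℝ)) ?_
  intro i _
  exact ((convex_convexHull ℝ _).smul _)

lemma Nmap_mem_Pset (hA : ∀ i, (A i).Nonempty) (hc : ∀ i, ∀ α ∈ A i, 0 < c i α)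
    (y : Fin n → ℝ) : Nmap A c s y ∈ Pset A s := by
  refine Set.finset_sum_mem_finset_sum Finset.univ _ _ fun i _ => ?_
  exact Set.smul_mem_smul_set (nu_mem_convexHull (hA i) (hc i) y)

lemma dotR_Nmap (y v : Fin n → ℝ) :
    dotR (Nmap A c s y) v = ∑ i, s i * dotR (nu (A i) (c i) y) v := by
  rw [Nmap, dotR_sum_left]
  exact Finset.sum_congr rfl fun i _ => dotR_smul_left _ _ _

lemma mem_Pset_of (hs : ∀ i, 0 < s i) {w : Fin ℓ → Fin n → ℝ}
    (hw : ∀ i, w i ∈ convexHull ℝ (aR '' ((A i : Set (Fin n → ℤ))))) :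
    (∑ i, s i • w i) ∈ Pset A s :=
  Set.finset_sum_mem_finset_sum Finset.univ _ _ fun i _ => Set.smul_mem_smul_set (hw i)

lemma sum_smul_sub (F G : Fin ℓ → (Fin n → ℝ)) :
    (∑ i, s i • F i) - (∑ i, s i • G i) = ∑ i, s i • (F i - G i) := by
  rw [← Finset.sum_sub_distrib]
  exact Finset.sum_congr rfl fun i _ => (smul_sub _ _ _).symm

lemma affineSpan_Pset (hA : ∀ i, (A i).Nonempty) (hs : ∀ i, 0 < s i)
    (hker : ∀ v : Fin n → ℝ,
      (∀ i, ∀ α ∈ A i, ∀ β ∈ A i, dotR (aR α) v = dotR (aR β) v) → v = 0) :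
    affineSpan ℝ (Pset A s) = ⊤ := by
  classical
  have hchoice : ∀ i, aR ((hA i).choose) ∈ convexHull ℝ (aR '' ((A i : Set (Fin n → ℤ)))) :=
    fun i => subset_convexHull ℝ _ (Set.mem_image_of_mem _ (hA i).choose_spec)
  have hz₀ : (∑ i, s i • aR ((hA i).choose)) ∈ Pset A s := mem_Pset_of hs hchoice
  rw [AffineSubspace.affineSpan_eq_top_iff_vectorSpan_eq_top_of_nonempty ℝ (Fin n → ℝ) (Fin n → ℝ)
    ⟨_, hz₀⟩]
  by_contra hne
  obtain ⟨g, hg0, hgbot⟩ := Submodule.exists_dual_map_eq_bot_of_lt_top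
    (p := vectorSpan ℝ (Pset A s)) (lt_top_iff_ne_top.2 hne) inferInstance
  have hgkill : ∀ w ∈ vectorSpan ℝ (Pset A s), g w = 0 := by
    intro w hw
    have h1 : g w ∈ Submodule.map g (vectorSpan ℝ (Pset A s)) := Submodule.mem_map_of_mem hw
    rw [hgbot] at h1
    simpa using h1
  set v : Fin n → ℝ := fun j => g (Pi.single j 1) with hv
  have hgv : ∀ z, g z = dotR z v := fun z => lin_eq_dotR g z
  have heq : ∀ i, ∀ α ∈ A i, ∀ β ∈ A i, dotR (aR α) v = dotR (aR β) v := by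
    intro i₀ α hα β hβ
    have hmemα : (∑ i, s i • (if i = i₀ then aR α else aR ((hA i).choose))) ∈ Pset A s := by
      refine mem_Pset_of hs fun i => ?_
      by_cases h : i = i₀
      · simpa [h] using subset_convexHull ℝ _ (Set.mem_image_of_mem _ (h ▸ hα))
      · simpa [h] using hchoice i
    have hmemβ : (∑ i, s i • (if i = i₀ then aR β else aR ((hA i).choose))) ∈ Pset A s := by
      refine mem_Pset_of hs fun i => ?_
      by_cases h : i = i₀
      · simpa [h] using subset_convexHull ℝ _ (Set.mem_image_of_mem _ (h ▸ hβ))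
      · simpa [h] using hchoice i
    have hdiff : (∑ i, s i • (if i = i₀ then aR α else aR ((hA i).choose)))
        - (∑ i, s i • (if i = i₀ then aR β else aR ((hA i).choose)))
        = s i₀ • (aR α - aR β) := by
      rw [sum_smul_sub]
      rw [Finset.sum_eq_single_of_mem i₀ (Finset.mem_univ i₀)]
      · simp
      · intro i _ h
        simp [h]
    have hmemvs : (∑ i, s i • (if i = i₀ then aR α else aR ((hA i).choose)))
        - (∑ i, s i • (if i = i₀ then aR β else aR ((hA i).choose)))
        ∈ vectorSpan ℝ (Pset A s) := vsub_mem_vectorSpan ℝ hmemα hmemβ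
    have h0 : g (s i₀ • (aR α - aR β)) = 0 := by
      rw [← hdiff]; exact hgkill _ hmemvs
    rw [map_smul, smul_eq_mul, mul_eq_zero] at h0
    rcases h0 with h | h
    · exact absurd h (hs i₀).ne'
    · rw [map_sub, sub_eq_zero] at h
      rw [← hgv, ← hgv]
      exact h
  have hv0 : v = 0 := hker v heq
  refine hg0 (LinearMap.ext fun z => ?_)
  rw [hgv z, hv0, dotR_zero_right]
  simp

lemma interior_Pset_nonempty (hA : ∀ i, (A i).Nonempty) (hs : ∀ i, 0 < s i)
    (hker : ∀ v : Fin n → ℝ,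
      (∀ i, ∀ α ∈ A i, ∀ β ∈ A i, dotR (aR α) v = dotR (aR β) v) → v = 0) :
    (interior (Pset A s)).Nonempty :=
  (convex_Pset.interior_nonempty_iff_affineSpan_eq_top).2 (affineSpan_Pset hA hs hker)

lemma Nmap_injective (hA : ∀ i, (A i).Nonempty) (hc : ∀ i, ∀ α ∈ A i, 0 < c i α)
    (hs : ∀ i, 0 < s i)
    (hker : ∀ v : Fin n → ℝ,
      (∀ i, ∀ α ∈ A i, ∀ β ∈ A i, dotR (aR α) v = dotR (aR β) v) → v = 0) :
    Function.Injective (Nmap A c s) := by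
  intro y y' hyy
  by_contra hne
  set v := y' - y with hv
  have hvne : v ≠ 0 := sub_ne_zero.2 (Ne.symm hne)
  have hex : ¬ (∀ i, ∀ α ∈ A i, ∀ β ∈ A i, dotR (aR α) v = dotR (aR β) v) :=
    fun h => hvne (hker v h)
  push_neg at hex
  obtain ⟨i₀, α, hα, β, hβ, hne'⟩ := hex
  have hy' : y' = y + v := by rw [hv]; abel
  have hlt : dotR (Nmap A c s y) v < dotR (Nmap A c s y') v := by
    rw [dotR_Nmap, dotR_Nmap, hy']
    refine Finset.sum_lt_sum
      (fun i _ => mul_le_mul_of_nonneg_left (dotR_nu_le (hA i) (hc i) y v) (hs i).le)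
      ⟨i₀, Finset.mem_univ _, ?_⟩
    exact mul_lt_mul_of_pos_left (dotR_nu_lt (hA i₀) (hc i₀) y v hα hβ hne') (hs i₀)
  rw [hyy] at hlt
  exact lt_irrefl _ hlt

lemma Nmap_mem_interior (hA : ∀ i, (A i).Nonempty) (hc : ∀ i, ∀ α ∈ A i, 0 < c i α)
    (hs : ∀ i, 0 < s i)
    (hker : ∀ v : Fin n → ℝ,
      (∀ i, ∀ α ∈ A i, ∀ β ∈ A i, dotR (aR α) v = dotR (aR β) v) → v = 0)
    (y : Fin n → ℝ) : Nmap A c s y ∈ interior (Pset A s) := by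
  classical
  by_contra hni
  obtain ⟨a₀, ha₀⟩ := interior_Pset_nonempty hA hs hker
  obtain ⟨f, hf⟩ := geometric_hahn_banach_open_point
    (convex_Pset (A := A) (s := s)).interior isOpen_interior hni
  set q := Nmap A c s y with hq
  have hle : ∀ z ∈ Pset A s, f z ≤ f q := by
    intro z hz
    by_contra hgt
    push_neg at hgt
    have ha₀q : f a₀ < f q := hf a₀ ha₀
    have hzfa : 0 < f z - f a₀ := by linarith
    have hratio : (f q - f a₀) / (f z - f a₀) < 1 := (div_lt_one hzfa).2 (by linarith)
    obtain ⟨t, ht1, ht2⟩ := exists_between hratio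
    have ht0 : 0 < t := lt_trans (div_pos (by linarith) hzfa) ht1
    have hmem : (1 - t) • a₀ + t • z ∈ interior (Pset A s) :=
      convex_Pset.combo_interior_self_mem_interior ha₀ hz (by linarith) ht0.le (by ring)
    have hcomb := hf _ hmem
    rw [map_add, map_smul, map_smul] at hcomb
    simp only [smul_eq_mul] at hcomb
    have ht' : f q - f a₀ < t * (f z - f a₀) := (div_lt_iff₀ hzfa).1 ht1
    nlinarith
  have hkey : ∀ i₀, ∀ α ∈ A i₀, f (aR α) ≤ f (nu (A i₀) (c i₀) y) := by
    intro i₀ α hα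
    set w : Fin ℓ → Fin n → ℝ := fun i => if i = i₀ then aR α else nu (A i) (c i) y with hw
    have hwm : ∀ i, w i ∈ convexHull ℝ (aR '' ((A i : Set (Fin n → ℤ)))) := by
      intro i
      by_cases h : i = i₀
      · simpa [hw, h] using subset_convexHull ℝ _ (Set.mem_image_of_mem _ (h ▸ hα))
      · simpa [hw, h] using nu_mem_convexHull (hA i) (hc i) y
    have hfz := hle _ (mem_Pset_of hs hwm)
    have e1 : f (∑ i, s i • w i) = ∑ i, s i * f (w i) := by
      rw [map_sum]
      exact Finset.sum_congr rfl fun i _ => by rw [map_smul]; simp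
    have e2 : f q = ∑ i, s i * f (nu (A i) (c i) y) := by
      rw [hq, Nmap, map_sum]
      exact Finset.sum_congr rfl fun i _ => by rw [map_smul]; simp
    rw [e1, e2] at hfz
    have hsub : ∑ i, (s i * f (w i) - s i * f (nu (A i) (c i) y)) ≤ 0 := by
      rw [Finset.sum_sub_distrib]
      linarith
    have hcollapse : ∑ i, (s i * f (w i) - s i * f (nu (A i) (c i) y))
        = s i₀ * f (aR α) - s i₀ * f (nu (A i₀) (c i₀) y) := by
      rw [Finset.sum_eq_single_of_mem i₀ (Finset.mem_univ i₀)]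
      · simp [hw]
      · intro i _ h
        simp [hw, h]
    rw [hcollapse] at hsub
    nlinarith [hs i₀]
  set v : Fin n → ℝ := fun j => f (Pi.single j 1) with hv
  have hfv : ∀ z, f z = dotR z v := fun z => lin_eq_dotR (f.toLinearMap) z
  have heqv : ∀ i, ∀ α ∈ A i, ∀ β ∈ A i, dotR (aR α) v = dotR (aR β) v := by
    intro i α hα β hβ
    have h1 := avg_eq_of_le (hA i) (hc i) y v (fun γ hγ => by
      rw [← hfv, ← hfv]; exact hkey i γ hγ)
    exact (h1 α hα).trans (h1 β hβ).symm
  have hv0 := hker v heqv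
  have hcontr : f a₀ < f q := hf a₀ ha₀
  rw [hfv a₀, hfv q, hv0, dotR_zero_right, dotR_zero_right] at hcontr
  exact lt_irrefl _ hcontr

lemma dotR_add_left (a b v : Fin n → ℝ) : dotR (a + b) v = dotR a v + dotR b v := by
  simp [dotR, add_mul, Finset.sum_add_distrib]

lemma dotR_le_support (hA : ∀ i, (A i).Nonempty) (hs : ∀ i, 0 < s i)
    {z : Fin n → ℝ} (hz : z ∈ Pset A s) (v : Fin n → ℝ) :
    dotR z v ≤ ∑ i, s i * (A i).sup' (hA i) (fun α => dotR (aR α) v) := by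
  rw [Pset] at hz
  obtain ⟨g, hg, hsum⟩ := (Set.mem_fintype_sum _ _).1 hz
  rw [← hsum, dotR_sum_left]
  refine Finset.sum_le_sum fun i _ => ?_
  obtain ⟨w, hw, hgw⟩ := hg i
  rw [← hgw, dotR_smul_left]
  exact mul_le_mul_of_nonneg_left (dotR_le_sup' (hA i) hw v) (hs i).le

lemma interior_lt_support (hA : ∀ i, (A i).Nonempty) (hs : ∀ i, 0 < s i)
    {p : Fin n → ℝ} (hp : p ∈ interior (Pset A s)) {v : Fin n → ℝ} (hv : v ≠ 0) :
    dotR p v < ∑ i, s i * (A i).sup' (hA i) (fun α => dotR (aR α) v) := by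
  obtain ⟨ε, hε, hball⟩ := Metric.isOpen_iff.1 isOpen_interior p hp
  have hnv : 0 < ‖v‖ := norm_pos_iff.2 hv
  set δ := ε / (2 * ‖v‖) with hδdef
  have hδ : 0 < δ := div_pos hε (by positivity)
  have hmem : p + δ • v ∈ Pset A s := by
    refine interior_subset (hball ?_)
    rw [Metric.mem_ball, dist_eq_norm, add_sub_cancel_left, norm_smul]
    rw [Real.norm_eq_abs, abs_of_pos hδ, hδdef]
    have harith : ε / (2 * ‖v‖) * ‖v‖ = ε / 2 := by
      field_simp
    rw [harith]
    linarith
  have h1 := dotR_le_support hA hs hmem v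
  have h2 : dotR (p + δ • v) v = dotR p v + δ * dotR v v := by
    rw [dotR_add_left, dotR_smul_left]
  have h3 : 0 < δ * dotR v v := mul_pos hδ (dotR_self_pos hv)
  linarith

lemma coercive_of_pos_on_sphere {H : (Fin n → ℝ) → ℝ} (hH0 : H 0 = 0)
    (hhom : ∀ t : ℝ, 0 ≤ t → ∀ v, H (t • v) = t * H v) (hcont : Continuous H)
    (hpos : ∀ v : Fin n → ℝ, v ≠ 0 → 0 < H v) :
    ∃ ε > 0, ∀ v : Fin n → ℝ, ε * ‖v‖ ≤ H v := by
  rcases Nat.eq_zero_or_pos n with hn | hn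
  · refine ⟨1, one_pos, fun v => ?_⟩
    have hv0 : v = 0 := by
      subst hn
      exact funext fun j => absurd j.isLt (by omega)
    rw [hv0, hH0, norm_zero, mul_zero]
  · haveI : Nontrivial (Fin n → ℝ) :=
      ⟨⟨Pi.single ⟨0, hn⟩ 1, 0, fun h => by simpa using congrFun h ⟨0, hn⟩⟩⟩
    have hsph : (Metric.sphere (0 : Fin n → ℝ) 1).Nonempty :=
      NormedSpace.sphere_nonempty.2 zero_le_one
    obtain ⟨v₀, hv₀mem, hv₀min⟩ :=
      (isCompact_sphere (0 : Fin n → ℝ) 1).exists_isMinOn hsph hcont.continuousOn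
    have hv₀norm : ‖v₀‖ = 1 := by simpa using hv₀mem
    have hv₀ne : v₀ ≠ 0 := by
      intro h
      rw [h, norm_zero] at hv₀norm
      norm_num at hv₀norm
    have hε : 0 < H v₀ := hpos v₀ hv₀ne
    refine ⟨H v₀, hε, fun v => ?_⟩
    rcases eq_or_ne v 0 with rfl | hv
    · rw [hH0, norm_zero, mul_zero]
    · have hnv : 0 < ‖v‖ := norm_pos_iff.2 hv
      have humem : ‖v‖⁻¹ • v ∈ Metric.sphere (0 : Fin n → ℝ) 1 := by
        rw [mem_sphere_zero_iff_norm, norm_smul, Real.norm_eq_abs,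
          abs_of_pos (inv_pos.2 hnv), inv_mul_cancel₀ hnv.ne']
      have hmin : H v₀ ≤ H (‖v‖⁻¹ • v) := hv₀min humem
      have hvv : H v = ‖v‖ * H (‖v‖⁻¹ • v) := by
        rw [← hhom ‖v‖ (norm_nonneg v) (‖v‖⁻¹ • v), smul_inv_smul₀ hnv.ne']
      rw [hvv]
      nlinarith

lemma continuous_dotR_right (a : Fin n → ℝ) : Continuous fun v : Fin n → ℝ => dotR a v := by
  unfold dotR
  exact continuous_finset_sum _ fun j _ => continuous_const.mul (continuous_apply j)

lemma support_coercive (hA : ∀ i, (A i).Nonempty) (hs : ∀ i, 0 < s i)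
    {p : Fin n → ℝ} (hp : p ∈ interior (Pset A s)) :
    ∃ ε > 0, ∀ v : Fin n → ℝ,
      ε * ‖v‖ ≤ (∑ i, s i * (A i).sup' (hA i) (fun α => dotR (aR α) v)) - dotR p v := by
  classical
  refine coercive_of_pos_on_sphere ?_ ?_ ?_ ?_
  · simp only [dotR_zero_right]
    rw [Finset.sum_eq_zero, sub_zero]
    intro i _
    rw [Finset.sup'_const, mul_zero]
  · intro t ht v
    simp only [dotR_smul_right]
    rw [mul_sub, Finset.mul_sum]
    congr 1
    refine Finset.sum_congr rfl fun i _ => ?_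
    have h := Finset.comp_sup'_eq_sup'_comp (hA i) (f := fun α => dotR (aR α) v)
      (fun x => t * x) (fun x y => by
        exact mul_max_of_nonneg x y ht)
    simp only [Function.comp] at h
    rw [← h]
    ring
  · refine Continuous.sub ?_ (continuous_dotR_right p)
    refine continuous_finset_sum _ fun i _ => ?_
    have hsup : Continuous fun v : Fin n → ℝ => (A i).sup' (hA i) fun α => dotR (aR α) v := by
      rw [continuous_iff_continuousAt]
      intro v
      exact Filter.Tendsto.finset_sup'_nhds_apply (hA i) fun α _ => ((continuous_dotR_right (aR α)).tendsto v)
    exact continuous_const.mul hsup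
  · intro v hv
    exact sub_pos.2 (interior_lt_support hA hs hp hv)

variable (A c s) in
/-- the convex potential whose gradient is the moment map. -/
def Gfun (p y : Fin n → ℝ) : ℝ :=
  (∑ i, s i * Real.log (Efun (A i) (c i) y)) - dotR p y

set_option maxHeartbeats 1000000 in
lemma Gfun_lower (hA : ∀ i, (A i).Nonempty) (hc : ∀ i, ∀ α ∈ A i, 0 < c i α)
    (hs : ∀ i, 0 < s i) (p y : Fin n → ℝ) :
    (∑ i, s i * (A i).inf' (hA i) fun α => Real.log (c i α))
      + ((∑ i, s i * (A i).sup' (hA i) fun α => dotR (aR α) y) - dotR p y)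
      ≤ Gfun A c s p y := by
  have hper : ∀ i, s i * ((A i).inf' (hA i) fun α => Real.log (c i α))
      + s i * ((A i).sup' (hA i) fun α => dotR (aR α) y)
      ≤ s i * Real.log (Efun (A i) (c i) y) := by
    intro i
    obtain ⟨α, hα, hsup⟩ := Finset.exists_mem_eq_sup' (hA i) (fun α => dotR (aR α) y)
    have h1 : c i α * Real.exp (dotR (aR α) y) ≤ Efun (A i) (c i) y := by
      unfold Efun
      exact Finset.single_le_sum (f := fun β => c i β * Real.exp (dotR (aR β) y))
        (fun β hβ => (mul_pos (hc i β hβ) (Real.exp_pos _)).le) hα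
    have h2 := Real.log_le_log (mul_pos (hc i α hα) (Real.exp_pos _)) h1
    rw [Real.log_mul (hc i α hα).ne' (Real.exp_pos _).ne', Real.log_exp] at h2
    have h3 : ((A i).inf' (hA i) fun α => Real.log (c i α)) ≤ Real.log (c i α) :=
      Finset.inf'_le _ hα
    have h4 : ((A i).inf' (hA i) fun α => Real.log (c i α))
        + ((A i).sup' (hA i) fun α => dotR (aR α) y) ≤ Real.log (Efun (A i) (c i) y) := by
      rw [hsup]
      linarith
    calc s i * ((A i).inf' (hA i) fun α => Real.log (c i α))
          + s i * ((A i).sup' (hA i) fun α => dotR (aR α) y)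
        = s i * (((A i).inf' (hA i) fun α => Real.log (c i α))
          + ((A i).sup' (hA i) fun α => dotR (aR α) y)) := by ring
      _ ≤ s i * Real.log (Efun (A i) (c i) y) := mul_le_mul_of_nonneg_left h4 (hs i).le
  have hsum := Finset.sum_le_sum fun i (_ : i ∈ Finset.univ) => hper i
  rw [Finset.sum_add_distrib] at hsum
  unfold Gfun
  linarith

lemma continuous_Gfun (hA : ∀ i, (A i).Nonempty) (hc : ∀ i, ∀ α ∈ A i, 0 < c i α)
    (p : Fin n → ℝ) : Continuous (Gfun A c s p) := by
  refine Continuous.sub ?_ (continuous_dotR_right p)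
  refine continuous_finset_sum _ fun i _ => ?_
  refine continuous_const.mul ?_
  refine Continuous.log ?_ fun y => (Efun_pos (hA i) (hc i) y).ne'
  unfold Efun
  refine continuous_finset_sum _ fun α _ => ?_
  exact continuous_const.mul (Real.continuous_exp.comp (continuous_dotR_right (aR α)))

lemma exists_min_Gfun (hA : ∀ i, (A i).Nonempty) (hc : ∀ i, ∀ α ∈ A i, 0 < c i α)
    (hs : ∀ i, 0 < s i) {p : Fin n → ℝ} (hp : p ∈ interior (Pset A s)) :
    ∃ y₀, ∀ y, Gfun A c s p y₀ ≤ Gfun A c s p y := by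
  obtain ⟨ε, hε, hco⟩ := support_coercive hA hs hp
  set C : ℝ := ∑ i, s i * (A i).inf' (hA i) fun α => Real.log (c i α) with hC
  have hlb : ∀ y, C + ε * ‖y‖ ≤ Gfun A c s p y := by
    intro y
    have h1 := Gfun_lower hA hc hs p y
    have h2 := hco y
    linarith
  set R : ℝ := max 0 ((Gfun A c s p 0 - C) / ε + 1) with hR
  have hR0 : (0 : ℝ) ≤ R := le_max_left _ _
  have hGc := continuous_Gfun (s := s) hA hc p
  obtain ⟨y₀, hy₀mem, hy₀min⟩ :=
    (isCompact_closedBall (0 : Fin n → ℝ) R).exists_isMinOn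
      ⟨0, by simp [hR0]⟩ hGc.continuousOn
  refine ⟨y₀, fun y => ?_⟩
  by_cases hy : y ∈ Metric.closedBall (0 : Fin n → ℝ) R
  · exact hy₀min hy
  · have h1 : R < ‖y‖ := by
      rw [Metric.mem_closedBall, dist_zero_right, not_le] at hy
      exact hy
    have h2 : (Gfun A c s p 0 - C) / ε + 1 ≤ R := le_max_right _ _
    have h3 : ε * ((Gfun A c s p 0 - C) / ε) = Gfun A c s p 0 - C := by
      field_simp
    have h4 : Gfun A c s p 0 < Gfun A c s p y := by
      have h5 := hlb y
      have h6 : ε * R < ε * ‖y‖ := by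
        exact mul_lt_mul_of_pos_left h1 hε
      have h7 : ε * ((Gfun A c s p 0 - C) / ε + 1) ≤ ε * R :=
        mul_le_mul_of_nonneg_left h2 hε.le
      rw [mul_add, h3, mul_one] at h7
      linarith
    have h8 : Gfun A c s p y₀ ≤ Gfun A c s p 0 := hy₀min (by simp [hR0])
    linarith

lemma hasDerivAt_Gfun_dir (hA : ∀ i, (A i).Nonempty) (hc : ∀ i, ∀ α ∈ A i, 0 < c i α)
    (p u y₀ : Fin n → ℝ) :
    HasDerivAt (fun t : ℝ => Gfun A c s p (y₀ + t • u))
      (dotR (Nmap A c s y₀) u - dotR p u) 0 := by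
  have hEeq : ∀ i, (fun t : ℝ => ∑ α ∈ A i,
        c i α * Real.exp (dotR (aR α) y₀ + t * dotR (aR α) u))
      = fun t : ℝ => Efun (A i) (c i) (y₀ + t • u) := by
    intro i
    funext t
    unfold Efun
    refine Finset.sum_congr rfl fun α _ => ?_
    rw [dotR_add_right, dotR_smul_right]
  have hE : ∀ i, HasDerivAt (fun t : ℝ => Efun (A i) (c i) (y₀ + t • u))
      (∑ α ∈ A i, c i α * (Real.exp (dotR (aR α) y₀ + 0 * dotR (aR α) u) * dotR (aR α) u))
      0 := by
    intro i
    have hder : HasDerivAt (fun t : ℝ => ∑ α ∈ A i,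
        c i α * Real.exp (dotR (aR α) y₀ + t * dotR (aR α) u))
        (∑ α ∈ A i, c i α * (Real.exp (dotR (aR α) y₀ + 0 * dotR (aR α) u) * dotR (aR α) u))
        0 := by
      refine HasDerivAt.fun_sum fun α _ => ?_
      exact (((hasDerivAt_mul_const (dotR (aR α) u)).const_add (dotR (aR α) y₀)).exp).const_mul
        (c i α)
    rw [hEeq i] at hder
    exact hder
  have hne : ∀ i, (fun t : ℝ => Efun (A i) (c i) (y₀ + t • u)) 0 ≠ 0 := by
    intro i
    simp only [zero_smul, add_zero]
    exact (Efun_pos (hA i) (hc i) y₀).ne'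
  have hlog : ∀ i, HasDerivAt
      (fun t : ℝ => Real.log (Efun (A i) (c i) (y₀ + t • u)))
      ((∑ α ∈ A i, c i α * (Real.exp (dotR (aR α) y₀ + 0 * dotR (aR α) u) * dotR (aR α) u))
        / Efun (A i) (c i) (y₀ + (0:ℝ) • u)) 0 :=
    fun i => (hE i).log (hne i)
  have hlin : HasDerivAt (fun t : ℝ => dotR p (y₀ + t • u)) (dotR p u) 0 := by
    have h0 : (fun t : ℝ => dotR p y₀ + t * dotR p u) = fun t : ℝ => dotR p (y₀ + t • u) := by
      funext t
      rw [dotR_add_right, dotR_smul_right]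
    have h1 : HasDerivAt (fun t : ℝ => dotR p y₀ + t * dotR p u) (dotR p u) 0 :=
      (hasDerivAt_mul_const (dotR p u)).const_add (dotR p y₀)
    rw [h0] at h1
    exact h1
  have htot := HasDerivAt.fun_sub (HasDerivAt.fun_sum
    (fun i (_ : i ∈ Finset.univ) => (hlog i).const_mul (s i))) hlin
  have hval : (∑ i, s i *
        ((∑ α ∈ A i, c i α * (Real.exp (dotR (aR α) y₀ + 0 * dotR (aR α) u) * dotR (aR α) u))
          / Efun (A i) (c i) (y₀ + (0:ℝ) • u)))
      - dotR p u = dotR (Nmap A c s y₀) u - dotR p u := by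
    simp only [zero_mul, add_zero, zero_smul]
    congr 1
    rw [dotR_Nmap]
    refine Finset.sum_congr rfl fun i _ => ?_
    rw [dotR_nu]
    congr 2
    refine Finset.sum_congr rfl fun α _ => by ring
  rw [hval] at htot
  exact htot

lemma Nmap_surjOn (hA : ∀ i, (A i).Nonempty) (hc : ∀ i, ∀ α ∈ A i, 0 < c i α)
    (hs : ∀ i, 0 < s i) {p : Fin n → ℝ} (hp : p ∈ interior (Pset A s)) :
    ∃ y, Nmap A c s y = p := by
  obtain ⟨y₀, hmin⟩ := exists_min_Gfun hA hc hs hp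
  refine ⟨y₀, ?_⟩
  have hdir : ∀ u : Fin n → ℝ, dotR (Nmap A c s y₀) u - dotR p u = 0 := by
    intro u
    have hloc : IsLocalMin (fun t : ℝ => Gfun A c s p (y₀ + t • u)) 0 := by
      refine IsMinOn.isLocalMin (s := Set.univ) ?_ Filter.univ_mem
      intro t _
      simp only [Set.mem_setOf_eq, zero_smul, add_zero]
      exact hmin _
    have hD := hasDerivAt_Gfun_dir (s := s) hA hc p u y₀
    have := hloc.deriv_eq_zero
    rw [hD.deriv] at this
    exact this
  funext j
  have := hdir (Pi.single j 1)
  rw [dotR_single_right, dotR_single_right] at this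
  linarith

lemma bijOn_Nmap (hA : ∀ i, (A i).Nonempty) (hc : ∀ i, ∀ α ∈ A i, 0 < c i α)
    (hs : ∀ i, 0 < s i)
    (hker : ∀ v : Fin n → ℝ,
      (∀ i, ∀ α ∈ A i, ∀ β ∈ A i, dotR (aR α) v = dotR (aR β) v) → v = 0) :
    Set.BijOn (Nmap A c s) Set.univ (interior (Pset A s)) := by
  refine ⟨fun y _ => Nmap_mem_interior hA hc hs hker y,
    (Nmap_injective hA hc hs hker).injOn, ?_⟩
  intro p hp
  obtain ⟨y, hy⟩ := Nmap_surjOn hA hc hs hp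
  exact ⟨y, Set.mem_univ y, hy⟩

lemma nu_apply (S : Finset (Fin n → ℤ)) (d : (Fin n → ℤ) → ℝ) (y : Fin n → ℝ) (j : Fin n) :
    nu S d y j = (∑ α ∈ S, d α * Real.exp (dotR (aR α) y) * (α j : ℝ)) / Efun S d y := by
  simp only [nu, Pi.smul_apply, Finset.sum_apply, smul_eq_mul]
  rw [inv_mul_eq_div]
  rfl

lemma Nmap_apply {ℓ : ℕ} (A : Fin ℓ → Finset (Fin n → ℤ)) (c : Fin ℓ → (Fin n → ℤ) → ℝ)
    (s : Fin ℓ → ℝ) (y : Fin n → ℝ) (j : Fin n) :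
    Nmap A c s y j = ∑ i, s i *
      ((∑ α ∈ A i, c i α * Real.exp (dotR (aR α) y) * (α j : ℝ)) / Efun (A i) (c i) y) := by
  simp only [Nmap, Finset.sum_apply, Pi.smul_apply, smul_eq_mul]
  exact Finset.sum_congr rfl fun i _ => by rw [nu_apply]

end Multi

end

end Stmt11Aux

open Stmt11Aux in
/-- the moment map is a bijection onto the interior of `P(s)`. For
Laurent polynomials with positive coefficients and `s ∈ ℝ^ℓ_{>0}`, the moment map
`μ(x)_j = x_j Σᵢ sᵢ (∂fᵢ/∂x_j)(x)/fᵢ(x)` is a bijection from `ℝⁿ₊` onto `int(P(s))`. -/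
theorem stmt_11 (n ℓ : ℕ) (A : Fin ℓ → Finset (Fin n → ℤ))
    (c : Fin ℓ → (Fin n → ℤ) → ℝ) (hc : ∀ i, ∀ α ∈ A i, 0 < c i α)
    (s : Fin ℓ → ℝ) (hs : ∀ i, 0 < s i)
    (f : Fin ℓ → (Fin n → ℝ) → ℝ)
    (hf : ∀ i x, f i x = ∑ α ∈ A i, c i α * ∏ j, x j ^ (α j))
    -- first partial derivatives `∂fᵢ/∂x_j` (valid on `ℝⁿ₊`)
    (pd : Fin ℓ → Fin n → (Fin n → ℝ) → ℝ)
    (hpd : ∀ i j x, pd i j x = ∑ α ∈ A i, c i α * (α j : ℝ) * (∏ m, x m ^ (α m)) / x j)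
    (Δ : Fin ℓ → Set (Fin n → ℝ))
    (hΔ : ∀ i, Δ i = convexHull ℝ
      ((fun (α : Fin n → ℤ) (j : Fin n) => (α j : ℝ)) '' (A i : Set (Fin n → ℤ))))
    (hdim : affineSpan ℝ (∑ i, Δ i) = ⊤)
    -- the moment map
    (μ : (Fin n → ℝ) → (Fin n → ℝ))
    (hμ : ∀ x j, μ x j = x j * ∑ i, s i * (pd i j x / f i x)) :
    Set.BijOn μ {x : Fin n → ℝ | ∀ j, 0 < x j} (interior (∑ i, s i • Δ i)) := by
  classical
  obtain ⟨z₀, hz₀⟩ :=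
    AffineSubspace.nonempty_of_affineSpan_eq_top ℝ (Fin n → ℝ) (Fin n → ℝ) hdim
  obtain ⟨g₀, hg₀, -⟩ := (Set.mem_fintype_sum _ _).1 hz₀
  have hA : ∀ i, (A i).Nonempty := by
    intro i
    rw [Finset.nonempty_iff_ne_empty]
    intro h
    have hmem := hg₀ i
    rw [hΔ i, h] at hmem
    simp at hmem
  have hΔ' : ∀ i, Δ i = convexHull ℝ (aR '' ((A i : Set (Fin n → ℤ)))) := by
    intro i
    rw [hΔ i]
    rfl
  have hker : ∀ v : Fin n → ℝ,
      (∀ i, ∀ α ∈ A i, ∀ β ∈ A i, dotR (aR α) v = dotR (aR β) v) → v = 0 := by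
    intro v hv
    have hconst : ∀ i, ∀ z ∈ Δ i, dotR z v = dotR (aR ((hA i).choose)) v := by
      intro i z hz
      rw [hΔ' i] at hz
      have hsub : aR '' ((A i : Set (Fin n → ℤ)))
          ⊆ {w : Fin n → ℝ | dotR w v = dotR (aR ((hA i).choose)) v} := by
        rintro _ ⟨α, hα, rfl⟩
        exact hv i α hα _ (hA i).choose_spec
      exact convexHull_min hsub (convex_hyperplane (isLinearMap_dotR v) _) hz
    have hS : ∀ z ∈ (∑ i, Δ i), dotR z v = ∑ i, dotR (aR ((hA i).choose)) v := by
      intro z hz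
      obtain ⟨g, hg, hsum⟩ := (Set.mem_fintype_sum _ _).1 hz
      rw [← hsum, dotR_sum_left]
      exact Finset.sum_congr rfl fun i _ => hconst i (g i) (hg i)
    have hvs : vectorSpan ℝ (∑ i, Δ i) = ⊤ :=
      AffineSubspace.vectorSpan_eq_top_of_affineSpan_eq_top ℝ (Fin n → ℝ) (Fin n → ℝ) hdim
    set L : (Fin n → ℝ) →ₗ[ℝ] ℝ := IsLinearMap.mk' _ (isLinearMap_dotR v) with hL
    have hle : vectorSpan ℝ (∑ i, Δ i) ≤ LinearMap.ker L := by
      rw [vectorSpan_def, Submodule.span_le]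
      intro w hw
      obtain ⟨z1, hz1, z2, hz2, rfl⟩ := Set.mem_vsub.1 hw
      rw [SetLike.mem_coe, LinearMap.mem_ker]
      rw [vsub_eq_sub, map_sub]
      simp only [hL, IsLinearMap.mk'_apply]
      rw [hS z1 hz1, hS z2 hz2, sub_self]
    rw [hvs] at hle
    funext j
    have h0 : L (Pi.single j 1) = 0 :=
      LinearMap.mem_ker.1 (hle Submodule.mem_top)
    have h1 : L (Pi.single j 1) = v j := by
      simp only [hL, IsLinearMap.mk'_apply]
      exact dotR_single_left v j
    have : v j = 0 := by rw [← h1, h0]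
    simpa using this
  have hPset : Pset A s = ∑ i, s i • Δ i := by
    unfold Pset
    exact Finset.sum_congr rfl fun i _ => by rw [hΔ' i]
  have hbij := bijOn_Nmap hA hc hs hker
  rw [hPset] at hbij
  set logm : (Fin n → ℝ) → (Fin n → ℝ) := fun x j => Real.log (x j) with hlogm
  have hlogbij : Set.BijOn logm {x : Fin n → ℝ | ∀ j, 0 < x j} Set.univ := by
    refine ⟨fun x _ => Set.mem_univ _, ?_, ?_⟩
    · intro x hx x' hx' hxx
      funext j
      have hj : Real.log (x j) = Real.log (x' j) := congrFun hxx j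
      calc x j = Real.exp (Real.log (x j)) := (Real.exp_log (hx j)).symm
        _ = Real.exp (Real.log (x' j)) := by rw [hj]
        _ = x' j := Real.exp_log (hx' j)
    · intro y _
      refine ⟨fun j => Real.exp (y j), fun j => Real.exp_pos _, ?_⟩
      funext j
      simp [hlogm, Real.log_exp]
  have hμeq : Set.EqOn (Nmap A c s ∘ logm) μ {x : Fin n → ℝ | ∀ j, 0 < x j} := by
    intro x hxmem
    have hx : ∀ j, 0 < x j := hxmem
    funext j
    rw [Function.comp_apply, Nmap_apply, hμ, Finset.mul_sum]
    refine Finset.sum_congr rfl fun i _ => ?_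
    have hprod : ∀ α : Fin n → ℤ,
        (∏ m, x m ^ (α m)) = Real.exp (dotR (aR α) (logm x)) := by
      intro α
      have hterm : ∀ m, x m ^ (α m) = Real.exp ((α m : ℝ) * Real.log (x m)) := by
        intro m
        rw [← Real.rpow_intCast (x m) (α m), Real.rpow_def_of_pos (hx m), mul_comm]
      calc (∏ m, x m ^ (α m)) = ∏ m, Real.exp ((α m : ℝ) * Real.log (x m)) :=
            Finset.prod_congr rfl fun m _ => hterm m
        _ = Real.exp (∑ m, (α m : ℝ) * Real.log (x m)) := (Real.exp_sum _ _).symm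
        _ = Real.exp (dotR (aR α) (logm x)) := rfl
    have hfE : f i x = Efun (A i) (c i) (logm x) := by
      rw [hf]
      unfold Stmt11Aux.Efun
      exact Finset.sum_congr rfl fun α _ => by rw [hprod α]
    have hpdx : x j * pd i j x
        = ∑ α ∈ A i, c i α * Real.exp (dotR (aR α) (logm x)) * (α j : ℝ) := by
      rw [hpd, Finset.mul_sum]
      refine Finset.sum_congr rfl fun α _ => ?_
      rw [← hprod α, mul_comm (x j) _, div_mul_cancel₀ _ (hx j).ne']
      ring
    rw [← hpdx, ← hfE]
    ring
  exact Set.BijOn.congr (hbij.comp hlogbij) hμeq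
end

section
/- The double integral of 1/((1+x₁)(1+x₁+x₂)(x₁+x₂)) over the positive quadrant equals π²/6: ∫_0^∞ ∫_0^∞ dx₁ dx₂ / ((1+x₁)(1+x₁+x₂)(x₁+x₂)) = π²/6. -/
open MeasureTheory Set Filter Real
open scoped Topology ENNReal


lemma stmt19_term (n : ℕ) :
    ∫⁻ t in Set.Ioo (0:ℝ) 1, ENNReal.ofReal (t ^ n / (n + 1)) =
      ENNReal.ofReal (1 / ((n : ℝ) + 1) ^ 2) := by
  have hint : IntegrableOn (fun t : ℝ => t ^ n / (n + 1)) (Set.Ioo 0 1) :=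
    (((continuous_pow n).div_const _).integrableOn_Ioc (a := 0) (b := 1)).mono_set
      Set.Ioo_subset_Ioc_self
  have hnn : 0 ≤ᵐ[volume.restrict (Set.Ioo (0:ℝ) 1)]
      fun t : ℝ => t ^ n / (n + 1) := by
    filter_upwards [ae_restrict_mem measurableSet_Ioo] with t ht
    have := ht.1
    positivity
  rw [← ofReal_integral_eq_lintegral_ofReal hint hnn]
  congr 1
  rw [← integral_Ioc_eq_integral_Ioo, ← intervalIntegral.integral_of_le zero_le_one]
  rw [intervalIntegral.integral_div, integral_pow]
  rw [one_pow, zero_pow (Nat.succ_ne_zero n)]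
  field_simp
  ring

lemma stmt19_hasSum_zeta :
    HasSum (fun n : ℕ => 1 / ((n : ℝ) + 1) ^ 2) (π ^ 2 / 6) := by
  have h := hasSum_zeta_two
  have h2 := (hasSum_nat_add_iff' (f := fun n : ℕ => 1 / (n : ℝ) ^ 2) 1).2 h
  simp only [Finset.range_one, Finset.sum_singleton, Nat.cast_zero] at h2
  norm_num at h2
  simpa [one_div] using h2

lemma stmt19_hser {t : ℝ} (ht : t ∈ Set.Ioo (0:ℝ) 1) :
      HasSum (fun n : ℕ => t ^ n / (n + 1)) (-Real.log (1 - t) / t) := by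
    have h := Real.hasSum_pow_div_log_of_abs_lt_one
      (x := t) (by rw [abs_of_pos ht.1]; exact ht.2)
    have h2 := h.div_const t
    have he : (fun n : ℕ => t ^ (n + 1) / (n + 1) / t) = fun n : ℕ => t ^ n / (n + 1) := by
      funext n
      rw [pow_succ]
      have : t ≠ 0 := ne_of_gt ht.1
      field_simp
    rwa [he] at h2

lemma stmt19_lint :
    ∫⁻ t in Set.Ioo (0:ℝ) 1, ENNReal.ofReal (-Real.log (1 - t) / t) =
      ENNReal.ofReal (π ^ 2 / 6) := by
  have hcongr : ∀ t ∈ Set.Ioo (0:ℝ) 1,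
      ENNReal.ofReal (-Real.log (1 - t) / t) =
        ∑' n : ℕ, ENNReal.ofReal (t ^ n / (n + 1)) := by
    intro t ht
    have hs := stmt19_hser ht
    rw [← hs.tsum_eq, ENNReal.ofReal_tsum_of_nonneg
      (fun n => by have := ht.1; positivity) hs.summable]
  rw [setLIntegral_congr_fun measurableSet_Ioo hcongr,
    lintegral_tsum (fun n => (((measurable_id'.pow_const n).div_const _).ennreal_ofReal).aemeasurable)]
  simp_rw [stmt19_term]
  rw [← ENNReal.ofReal_tsum_of_nonneg (fun n => by positivity) stmt19_hasSum_zeta.summable,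
    stmt19_hasSum_zeta.tsum_eq]

lemma stmt19_h_meas : Measurable fun t : ℝ => -Real.log (1 - t) / t :=
  ((Real.measurable_log.comp (measurable_const.sub measurable_id)).neg).div measurable_id

lemma stmt19_h_nn : 0 ≤ᵐ[volume.restrict (Set.Ioo (0:ℝ) 1)]
    fun t : ℝ => -Real.log (1 - t) / t := by
  filter_upwards [ae_restrict_mem measurableSet_Ioo] with t ht
  have h1 : Real.log (1 - t) ≤ 0 := Real.log_nonpos (by linarith [ht.2]) (by linarith [ht.1])
  exact div_nonneg (neg_nonneg.2 h1) ht.1.le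

lemma stmt19_h_int : IntegrableOn (fun t : ℝ => -Real.log (1 - t) / t) (Set.Ioo 0 1) := by
  refine ⟨stmt19_h_meas.aestronglyMeasurable, ?_⟩
  rw [hasFiniteIntegral_iff_ofReal stmt19_h_nn, stmt19_lint]
  exact ENNReal.ofReal_lt_top

lemma stmt19_h_integral :
    ∫ t in Set.Ioo (0:ℝ) 1, -Real.log (1 - t) / t = π ^ 2 / 6 := by
  rw [integral_eq_lintegral_of_nonneg_ae stmt19_h_nn stmt19_h_meas.aestronglyMeasurable,
    stmt19_lint, ENNReal.toReal_ofReal (by positivity)]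

-- substitution data: φ t = t⁻¹ - 1 maps Ioo 0 1 onto Ioi 0
lemma stmt19_img : (fun t : ℝ => t⁻¹ - 1) '' Set.Ioo 0 1 = Set.Ioi 0 := by
  ext x
  constructor
  · rintro ⟨t, ht, rfl⟩
    have h1 : (1:ℝ) < t⁻¹ := (one_lt_inv_iff₀).2 ⟨ht.1, ht.2⟩
    simp only [Set.mem_Ioi]
    linarith
  · intro hx
    simp only [Set.mem_Ioi] at hx
    refine ⟨(1 + x)⁻¹, ⟨by positivity, ?_⟩, ?_⟩
    · rw [inv_lt_one_iff₀]
      right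
      linarith
    · simp only
      rw [inv_inv]
      ring

lemma stmt19_deriv : ∀ t ∈ Set.Ioo (0:ℝ) 1,
    HasDerivWithinAt (fun t : ℝ => t⁻¹ - 1) (-(t ^ 2)⁻¹) (Set.Ioo 0 1) t := by
  intro t ht
  exact ((hasDerivAt_inv (ne_of_gt ht.1)).sub_const 1).hasDerivWithinAt

lemma stmt19_inj : Set.InjOn (fun t : ℝ => t⁻¹ - 1) (Set.Ioo 0 1) := by
  intro a ha b hb h
  simp only [sub_left_inj] at h
  exact inv_injective h

lemma stmt19_congr_sub : ∀ t ∈ Set.Ioo (0:ℝ) 1,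
    |(-(t ^ 2)⁻¹)| • ((Real.log (1 + (t⁻¹ - 1)) - Real.log (t⁻¹ - 1)) / (1 + (t⁻¹ - 1)))
      = -Real.log (1 - t) / t := by
  intro t ht
  have ht0 : t ≠ 0 := ne_of_gt ht.1
  have h1t : (0:ℝ) < 1 - t := by linarith [ht.2]
  have e1 : 1 + (t⁻¹ - 1) = t⁻¹ := by ring
  have e2 : t⁻¹ - 1 = (1 - t) / t := by field_simp
  rw [e1, e2, Real.log_inv, Real.log_div (ne_of_gt h1t) ht0, smul_eq_mul,
    abs_neg, abs_inv, abs_of_pos (by positivity : (0:ℝ) < t ^ 2)]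
  field_simp
  ring

lemma stmt19_g_int :
    IntegrableOn (fun a : ℝ => (Real.log (1 + a) - Real.log a) / (1 + a)) (Set.Ioi 0) := by
  rw [← stmt19_img,
    integrableOn_image_iff_integrableOn_abs_deriv_smul measurableSet_Ioo stmt19_deriv stmt19_inj]
  exact (stmt19_h_int.congr_fun (fun t ht => (stmt19_congr_sub t ht).symm) measurableSet_Ioo).congr_fun
    (fun t ht => rfl) measurableSet_Ioo

lemma stmt19_g_integral :
    ∫ a in Set.Ioi (0:ℝ), (Real.log (1 + a) - Real.log a) / (1 + a) = π ^ 2 / 6 := by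
  rw [← stmt19_img,
    integral_image_eq_integral_abs_deriv_smul measurableSet_Ioo stmt19_deriv stmt19_inj,
    setIntegral_congr_fun measurableSet_Ioo stmt19_congr_sub]
  exact stmt19_h_integral

section
variable {a : ℝ} (ha : 0 < a)

lemma stmt19_G_deriv (ha : 0 < a) : ∀ y ∈ Set.Ici (0:ℝ),
    HasDerivAt (fun y : ℝ => (Real.log (a + y) - Real.log (1 + a + y)) / (1 + a))
      (1 / ((1 + a) * (1 + a + y) * (a + y))) y := by
  intro y hy
  have hy0 : (0:ℝ) ≤ y := hy
  have h1 : (0:ℝ) < a + y := by linarith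
  have h2 : (0:ℝ) < 1 + a + y := by linarith
  have d1 : HasDerivAt (fun y : ℝ => Real.log (a + y)) (1 / (a + y)) y := by
    simpa using (((hasDerivAt_id y).const_add a).log (ne_of_gt h1))
  have d2 : HasDerivAt (fun y : ℝ => Real.log (1 + a + y)) (1 / (1 + a + y)) y := by
    simpa using (((hasDerivAt_id y).const_add (1 + a)).log (ne_of_gt h2))
  have := (d1.sub d2).div_const (1 + a)
  refine this.congr_deriv ?_
  have h3 : (0:ℝ) < 1 + a := by linarith
  field_simp
  ring

lemma stmt19_G_tendsto (ha : 0 < a) :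
    Tendsto (fun y : ℝ => (Real.log (a + y) - Real.log (1 + a + y)) / (1 + a)) atTop
      (𝓝 0) := by
  have h1 : Tendsto (fun y : ℝ => 1 + (a + y)⁻¹) atTop (𝓝 1) := by
    have : Tendsto (fun y : ℝ => a + y) atTop atTop :=
      tendsto_atTop_add_const_left _ a tendsto_id
    simpa using tendsto_const_nhds.add this.inv_tendsto_atTop
  have h2 : Tendsto (fun y : ℝ => Real.log (1 + (a + y)⁻¹)) atTop (𝓝 0) := by
    have := (Real.continuousAt_log one_ne_zero).tendsto.comp h1
    simpa [Function.comp_def] using this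
  have h3 : Tendsto (fun y : ℝ => Real.log (a + y) - Real.log (1 + a + y)) atTop (𝓝 0) := by
    have heq : ∀ᶠ y : ℝ in atTop,
        -Real.log (1 + (a + y)⁻¹) = Real.log (a + y) - Real.log (1 + a + y) := by
      filter_upwards [eventually_gt_atTop 0] with y hy
      have hay : (0:ℝ) < a + y := by linarith
      have : 1 + (a + y)⁻¹ = (1 + a + y) / (a + y) := by field_simp; ring
      rw [this, Real.log_div (by positivity) (ne_of_gt hay)]
      ring
    exact Tendsto.congr' heq (by simpa using h2.neg)
  simpa using h3.div_const (1 + a)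

lemma stmt19_inner_int (ha : 0 < a) :
    IntegrableOn (fun y : ℝ => 1 / ((1 + a) * (1 + a + y) * (a + y))) (Set.Ioi 0) := by
  refine integrableOn_Ioi_deriv_of_nonneg' (stmt19_G_deriv ha) (fun y hy => ?_)
    (stmt19_G_tendsto ha)
  have hy : (0:ℝ) < y := hy
  positivity

lemma stmt19_inner_integral (ha : 0 < a) :
    ∫ y in Set.Ioi (0:ℝ), 1 / ((1 + a) * (1 + a + y) * (a + y))
      = (Real.log (1 + a) - Real.log a) / (1 + a) := by
  rw [integral_Ioi_of_hasDerivAt_of_nonneg' (stmt19_G_deriv ha)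
    (fun y hy => by have hy : (0:ℝ) < y := hy; positivity) (stmt19_G_tendsto ha)]
  rw [add_zero, add_zero]
  ring

end

/-- The double integral of `1/((1+x₁)(1+x₁+x₂)(x₁+x₂))` over the
positive quadrant equals `π²/6`. -/
theorem stmt_19 :
    ∫ p in (Set.Ioi (0 : ℝ) ×ˢ Set.Ioi (0 : ℝ)),
        1 / ((1 + p.1) * (1 + p.1 + p.2) * (p.1 + p.2)) = Real.pi ^ 2 / 6 := by
  have hc : Continuous fun p : ℝ × ℝ => (1 + p.1) * (1 + p.1 + p.2) * (p.1 + p.2) := by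
    continuity
  have hmeas : Measurable fun p : ℝ × ℝ => 1 / ((1 + p.1) * (1 + p.1 + p.2) * (p.1 + p.2)) :=
    measurable_const.div hc.measurable
  have h_nn : 0 ≤ᵐ[volume.restrict (Set.Ioi (0:ℝ) ×ˢ Set.Ioi (0:ℝ))]
      fun p : ℝ × ℝ => 1 / ((1 + p.1) * (1 + p.1 + p.2) * (p.1 + p.2)) := by
    filter_upwards [ae_restrict_mem (measurableSet_Ioi.prod measurableSet_Ioi)] with p hp
    have h1 : (0:ℝ) < p.1 := hp.1
    have h2 : (0:ℝ) < p.2 := hp.2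
    positivity
  rw [integral_eq_lintegral_of_nonneg_ae h_nn hmeas.aestronglyMeasurable]
  have hrestrict : (volume : Measure (ℝ × ℝ)).restrict (Set.Ioi (0:ℝ) ×ˢ Set.Ioi (0:ℝ))
      = (volume.restrict (Set.Ioi (0:ℝ))).prod (volume.restrict (Set.Ioi (0:ℝ))) := by
    rw [Measure.prod_restrict, ← MeasureTheory.Measure.volume_eq_prod]
  rw [hrestrict, lintegral_prod _ (hmeas.ennreal_ofReal.aemeasurable)]
  have hinner : ∀ x ∈ Set.Ioi (0:ℝ),
      ∫⁻ y in Set.Ioi (0:ℝ), ENNReal.ofReal (1 / ((1 + x) * (1 + x + y) * (x + y)))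
        = ENNReal.ofReal ((Real.log (1 + x) - Real.log x) / (1 + x)) := by
    intro x hx
    have hx : (0:ℝ) < x := hx
    rw [← ofReal_integral_eq_lintegral_ofReal (stmt19_inner_int hx) ?_,
      stmt19_inner_integral hx]
    filter_upwards [ae_restrict_mem measurableSet_Ioi] with y hy
    have hy : (0:ℝ) < y := hy
    positivity
  rw [setLIntegral_congr_fun measurableSet_Ioi hinner]
  have hg_nn : 0 ≤ᵐ[volume.restrict (Set.Ioi (0:ℝ))]
      fun a : ℝ => (Real.log (1 + a) - Real.log a) / (1 + a) := by
    filter_upwards [ae_restrict_mem measurableSet_Ioi] with a haa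
    have ha : (0:ℝ) < a := haa
    have : Real.log a ≤ Real.log (1 + a) := Real.log_le_log ha (by linarith)
    have h1a : (0:ℝ) < 1 + a := by linarith
    exact div_nonneg (by linarith) h1a.le
  rw [← ofReal_integral_eq_lintegral_ofReal stmt19_g_int hg_nn, stmt19_g_integral,
    ENNReal.toReal_ofReal (by positivity)]
end
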